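/- arXiv:1308.5000 — 2 statements merged into one kernel-verified Lean document; each statement's English description precedes it below -/
import Mathlib

section
/- Let A ∈ ℝ^{m×n}, let D ∈ ℝ^{n×p} be a tight frame (DDᵀ = Iₙ), and let A satisfy the D-RIP adapted to D with constant σ_{2s} < 1/(1+3√2). Let λ > 0, ρ > 0, x ∈ ℝⁿ, and b = Ax + w with ‖DᵀAᵀw‖_∞ ≤ λ/2. Let (x̂_ρ, ẑ_ρ) be a minimizer of the RALASSO problem min_{x,z} (1/2)‖Ax − b‖₂² + λ‖z‖₁ + (ρ/2)‖z − Dᵀx‖₂², set h = x̂_ρ − x, let T be the set of indices of the s largest-magnitude entries of Dᵀx, and let c₀ = 1/2 + ‖DᵀD‖_{1,1}. Then ‖Dᵀ_{T^c}h‖₁ ≤ (1−σ_{2s})/(1−(1+3√2)σ_{2s}) · (λ/ρ)·p + ( 3√2·λ·s·c₀ + 4(1−σ_{2s})·‖Dᵀ_{T^c}x‖₁ ) / (1−(1+3√2)σ_{2s}). -/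
open scoped BigOperators

/-- Euclidean (ℓ₂) norm of a vector in ℝᵏ. -/
noncomputable def l2norm {k : ℕ} (v : Fin k → ℝ) : ℝ := Real.sqrt (∑ i, (v i) ^ 2)

/-- ℓ₁ norm of a vector in ℝᵏ. -/
noncomputable def l1norm {k : ℕ} (v : Fin k → ℝ) : ℝ := ∑ i, |v i|

/-- ℓ∞ norm of a vector in ℝᵏ. -/
noncomputable def linfnorm {k : ℕ} (v : Fin k → ℝ) : ℝ := ⨆ i, |v i|

/-- Number of nonzero entries of a vector ("ℓ₀ norm"). -/
noncomputable def l0norm {k : ℕ} (v : Fin k → ℝ) : ℕ :=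
  (Finset.univ.filter (fun i => v i ≠ 0)).card

/-- The vector equal to `v` on coordinates in `S` and zero elsewhere. -/
def restr {k : ℕ} (S : Finset (Fin k)) (v : Fin k → ℝ) : Fin k → ℝ :=
  fun i => if i ∈ S then v i else 0

/-- The induced `(1,1)` matrix norm: `‖M‖_{1,1} = sup_{x ≠ 0} ‖Mx‖₁ / ‖x‖₁`. -/
noncomputable def matnorm11 {a b : ℕ} (M : Matrix (Fin a) (Fin b) ℝ) : ℝ :=
  ⨆ x : {x : Fin b → ℝ // x ≠ 0}, l1norm (M.mulVec x.1) / l1norm x.1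

/-- D-RIP of `A` adapted to `D` with sparsity level `s` and constant `σ`. -/
def DRIP {m n p : ℕ} (A : Matrix (Fin m) (Fin n) ℝ) (D : Matrix (Fin n) (Fin p) ℝ)
    (s : ℕ) (σ : ℝ) : Prop :=
  ∀ w : Fin p → ℝ, l0norm w ≤ s →
    (1 - σ) * (l2norm (D.mulVec w)) ^ 2 ≤ (l2norm (A.mulVec (D.mulVec w))) ^ 2 ∧
    (l2norm (A.mulVec (D.mulVec w))) ^ 2 ≤ (1 + σ) * (l2norm (D.mulVec w)) ^ 2


namespace RalassoAux
open Matrix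

variable {k : ℕ}

lemma l2sq (v : Fin k → ℝ) : (l2norm v) ^ 2 = ∑ i, v i ^ 2 := by
  rw [l2norm, Real.sq_sqrt]; positivity

lemma l2nn (v : Fin k → ℝ) : 0 ≤ l2norm v := Real.sqrt_nonneg _

lemma l1nn (v : Fin k → ℝ) : 0 ≤ l1norm v := Finset.sum_nonneg fun i _ => abs_nonneg _

lemma dot_self (v : Fin k → ℝ) : v ⬝ᵥ v = (l2norm v) ^ 2 := by
  rw [l2sq]; simp [dotProduct, sq]

lemma sq_le_imp {a b : ℝ} (hb : 0 ≤ b) (h : a ^ 2 ≤ b ^ 2) : a ≤ b := by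
  nlinarith [sq_nonneg (a - b), sq_nonneg (a + b)]

lemma cs_dot (u v : Fin k → ℝ) : u ⬝ᵥ v ≤ l2norm u * l2norm v := by
  have h := Finset.sum_mul_sq_le_sq_mul_sq Finset.univ u v
  have h2 : (u ⬝ᵥ v) ^ 2 ≤ (l2norm u * l2norm v) ^ 2 := by
    rw [mul_pow, l2sq, l2sq]; exact h
  exact sq_le_imp (mul_nonneg (l2nn u) (l2nn v)) h2

lemma l2_eq_zero {v : Fin k → ℝ} (h : l2norm v = 0) : v = 0 := by
  have h2 : ∑ i, v i ^ 2 = 0 := by rw [← l2sq, h]; ring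
  funext i
  have := (Finset.sum_eq_zero_iff_of_nonneg (fun i _ => sq_nonneg (v i))).1 h2 i (Finset.mem_univ i)
  exact pow_eq_zero_iff (by norm_num) |>.1 this

lemma l1_restr (S : Finset (Fin k)) (v : Fin k → ℝ) :
    l1norm (restr S v) = ∑ i ∈ S, |v i| := by
  rw [l1norm]
  simp only [restr, apply_ite (|·|), abs_zero]
  rw [Finset.sum_ite_mem, Finset.univ_inter]

lemma l2_restr_sq (S : Finset (Fin k)) (v : Fin k → ℝ) :
    (l2norm (restr S v)) ^ 2 = ∑ i ∈ S, v i ^ 2 := by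
  rw [l2sq]
  simp only [restr, apply_ite (· ^ 2), zero_pow (two_ne_zero), ne_eq]
  rw [Finset.sum_ite_mem, Finset.univ_inter]

lemma l1_le_sqrt_card (S : Finset (Fin k)) (v : Fin k → ℝ) :
    l1norm (restr S v) ≤ Real.sqrt S.card * l2norm (restr S v) := by
  have h := Finset.sum_mul_sq_le_sq_mul_sq S (fun i => |v i|) (fun _ => (1:ℝ))
  have h1 : (∑ i ∈ S, |v i|) ^ 2 ≤ S.card * ∑ i ∈ S, v i ^ 2 := by
    calc (∑ i ∈ S, |v i|) ^ 2 = (∑ i ∈ S, |v i| * 1) ^ 2 := by simp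
    _ ≤ (∑ i ∈ S, |v i| ^ 2) * (∑ _i ∈ S, (1:ℝ) ^ 2) := h
    _ = S.card * ∑ i ∈ S, v i ^ 2 := by
        simp [sq_abs, mul_comm]
  rw [l1_restr]
  apply sq_le_imp (mul_nonneg (Real.sqrt_nonneg _) (l2nn _))
  rw [mul_pow, Real.sq_sqrt (by positivity), l2_restr_sq]
  exact h1

lemma l2_le_sqrt_card_mul_max (S : Finset (Fin k)) (v : Fin k → ℝ) (M : ℝ) (hM : 0 ≤ M)
    (h : ∀ i ∈ S, |v i| ≤ M) :
    l2norm (restr S v) ≤ Real.sqrt S.card * M := by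
  apply sq_le_imp (by positivity)
  rw [mul_pow, Real.sq_sqrt (by positivity), l2_restr_sq]
  calc ∑ i ∈ S, v i ^ 2 ≤ ∑ _i ∈ S, M ^ 2 := by
        apply Finset.sum_le_sum; intro i hi
        rw [← sq_abs]; exact pow_le_pow_left₀ (abs_nonneg _) (h i hi) 2
  _ = S.card * M ^ 2 := by simp [mul_comm]

-- adjoint
lemma adj {a b : ℕ} (M : Matrix (Fin a) (Fin b) ℝ) (x : Fin b → ℝ) (y : Fin a → ℝ) :
    M.mulVec x ⬝ᵥ y = x ⬝ᵥ Mᵀ.mulVec y := by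
  rw [Matrix.dotProduct_mulVec, Matrix.vecMul_transpose]

lemma DDt_apply {n p : ℕ} (D : Matrix (Fin n) (Fin p) ℝ) (htf : D * Dᵀ = 1)
    (v : Fin n → ℝ) : D.mulVec (Dᵀ.mulVec v) = v := by
  rw [Matrix.mulVec_mulVec, htf, Matrix.one_mulVec]

-- contraction
lemma contr {n p : ℕ} (D : Matrix (Fin n) (Fin p) ℝ) (htf : D * Dᵀ = 1)
    (w : Fin p → ℝ) : l2norm (D.mulVec w) ≤ l2norm w := by
  set P := D.mulVec w with hP
  set x := Dᵀ.mulVec P with hx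
  have hDx : D.mulVec x = P := DDt_apply D htf P
  have hxx : x ⬝ᵥ x = P ⬝ᵥ P := by
    rw [hx, adj Dᵀ P x, Matrix.transpose_transpose, hDx]
  have hPP : P ⬝ᵥ P = w ⬝ᵥ x := by
    rw [hP, adj D w P]
  have hxnorm : l2norm x = l2norm P := by
    have := hxx
    rw [dot_self, dot_self] at this
    have h1 := sq_le_imp (l2nn P) this.le
    have h2 := sq_le_imp (l2nn x) this.ge
    linarith
  have hcs : w ⬝ᵥ x ≤ l2norm w * l2norm x := cs_dot w x
  have key : (l2norm P) ^ 2 ≤ l2norm w * l2norm P := by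
    rw [← dot_self, hPP]; rw [hxnorm] at hcs; exact hcs
  rcases eq_or_lt_of_le (l2nn P) with h0 | h0
  · rw [← h0]; exact l2nn w
  · nlinarith

-- l0 lemmas
lemma l0_le_card {S : Finset (Fin k)} {v : Fin k → ℝ} (h : ∀ i, v i ≠ 0 → i ∈ S) :
    l0norm v ≤ S.card := by
  apply Finset.card_le_card
  intro i hi
  simp only [Finset.mem_filter] at hi
  exact h i hi.2

lemma l0_restr (S : Finset (Fin k)) (v : Fin k → ℝ) : l0norm (restr S v) ≤ S.card := by
  apply l0_le_card
  intro i hi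
  by_contra h
  exact hi (by simp [restr, h])

lemma l0_combo (a c : ℝ) (w₁ w₂ : Fin k → ℝ) :
    l0norm (a • w₁ + c • w₂) ≤ l0norm w₁ + l0norm w₂ := by
  unfold l0norm
  calc (Finset.univ.filter (fun i => (a • w₁ + c • w₂) i ≠ 0)).card
      ≤ ((Finset.univ.filter (fun i => w₁ i ≠ 0)) ∪ (Finset.univ.filter (fun i => w₂ i ≠ 0))).card := by
        apply Finset.card_le_card
        intro i hi
        simp only [Finset.mem_filter, Finset.mem_union, Finset.mem_univ, true_and,
          Pi.add_apply, Pi.smul_apply, smul_eq_mul] at hi ⊢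
        by_contra h
        push_neg at h
        exact hi (by rw [h.1, h.2]; ring)
    _ ≤ _ := Finset.card_union_le _ _

lemma dot_expand (a c : ℝ) (x y : Fin k → ℝ) :
    (a • x + c • y) ⬝ᵥ (a • x + c • y)
      = a^2*(x ⬝ᵥ x) + 2*a*c*(x ⬝ᵥ y) + c^2*(y ⬝ᵥ y) := by
  simp only [dotProduct, Pi.add_apply, Pi.smul_apply, smul_eq_mul, Finset.mul_sum,
    ← Finset.sum_add_distrib]
  apply Finset.sum_congr rfl; intros; ring

-- polarization
lemma polar {m n p N : ℕ} {A : Matrix (Fin m) (Fin n) ℝ} {D : Matrix (Fin n) (Fin p) ℝ}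
    {σ : ℝ} (hA : DRIP A D N σ) (w₁ w₂ : Fin p → ℝ)
    (h1 : l0norm w₁ + l0norm w₂ ≤ N) :
    (A.mulVec (D.mulVec w₁)) ⬝ᵥ (A.mulVec (D.mulVec w₂))
      ≤ (D.mulVec w₁) ⬝ᵥ (D.mulVec w₂)
        + σ * l2norm (D.mulVec w₁) * l2norm (D.mulVec w₂) := by
  set P := D.mulVec w₁ with hP
  set Q := D.mulVec w₂ with hQ
  set α := l2norm P with hα
  set β := l2norm Q with hβ
  rcases eq_or_lt_of_le (l2nn P) with hz | hpos
  · have hz' : l2norm P = 0 := hz.symm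
    have hP0 : P = 0 := l2_eq_zero hz'
    rw [hP0, hα, hz']
    simp
  rcases eq_or_lt_of_le (l2nn Q) with hz | hqos
  · have hz' : l2norm Q = 0 := hz.symm
    have hQ0 : Q = 0 := l2_eq_zero hz'
    rw [hQ0, hβ, hz']
    simp
  -- main case
  have hu1 := hA (β • w₁ + α • w₂) (le_trans (l0_combo β α w₁ w₂) h1)
  have hu2 := hA (β • w₁ + (-α) • w₂) (le_trans (l0_combo β (-α) w₁ w₂) h1)
  have hDu1 : D.mulVec (β • w₁ + α • w₂) = β • P + α • Q := by
    rw [Matrix.mulVec_add, Matrix.mulVec_smul, Matrix.mulVec_smul]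
  have hDu2 : D.mulVec (β • w₁ + (-α) • w₂) = β • P + (-α) • Q := by
    rw [Matrix.mulVec_add, Matrix.mulVec_smul, Matrix.mulVec_smul]
  have hAu1 : A.mulVec (D.mulVec (β • w₁ + α • w₂)) = β • A.mulVec P + α • A.mulVec Q := by
    rw [hDu1, Matrix.mulVec_add, Matrix.mulVec_smul, Matrix.mulVec_smul]
  have hAu2 : A.mulVec (D.mulVec (β • w₁ + (-α) • w₂))
      = β • A.mulVec P + (-α) • A.mulVec Q := by
    rw [hDu2, Matrix.mulVec_add, Matrix.mulVec_smul, Matrix.mulVec_smul]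
  have up := hu1.2
  have low := hu2.1
  rw [hAu1, hDu1, ← dot_self, ← dot_self, dot_expand, dot_expand] at up
  rw [hAu2, hDu2, ← dot_self, ← dot_self, dot_expand, dot_expand] at low
  have hPP : P ⬝ᵥ P = α ^ 2 := dot_self P
  have hQQ : Q ⬝ᵥ Q = β ^ 2 := dot_self Q
  rw [hPP, hQQ] at up low
  nlinarith [mul_pos hpos hqos, cs_dot (A.mulVec P) (A.mulVec P), dot_self (A.mulVec P)]

-- l1 positivity
lemma l1_pos {v : Fin k → ℝ} (hv : v ≠ 0) : 0 < l1norm v := by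
  obtain ⟨i, hi⟩ := Function.ne_iff.1 hv
  have h1 : 0 < |v i| := abs_pos.2 hi
  exact lt_of_lt_of_le h1 (Finset.single_le_sum (f := fun j => |v j|)
    (fun j _ => abs_nonneg _) (Finset.mem_univ i))

lemma mulVec_l1_le {q r : ℕ} (M : Matrix (Fin q) (Fin r) ℝ) (x : Fin r → ℝ) :
    l1norm (M.mulVec x) ≤ (∑ i, ∑ j, |M i j|) * l1norm x := by
  have step : ∀ i, |M.mulVec x i| ≤ ∑ j, |M i j| * l1norm x := by
    intro i
    calc |M.mulVec x i| = |∑ j, M i j * x j| := rfl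
    _ ≤ ∑ j, |M i j * x j| := Finset.abs_sum_le_sum_abs _ _
    _ ≤ ∑ j, |M i j| * l1norm x := by
        apply Finset.sum_le_sum; intro j _
        rw [abs_mul]
        apply mul_le_mul_of_nonneg_left _ (abs_nonneg _)
        exact Finset.single_le_sum (f := fun j' => |x j'|) (fun _ _ => abs_nonneg _)
          (Finset.mem_univ j)
  calc l1norm (M.mulVec x) ≤ ∑ i, ∑ j, |M i j| * l1norm x := Finset.sum_le_sum fun i _ => step i
  _ = (∑ i, ∑ j, |M i j|) * l1norm x := by rw [Finset.sum_mul]; congr 1; ext i; rw [Finset.sum_mul]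

lemma matnorm_bdd {q r : ℕ} (M : Matrix (Fin q) (Fin r) ℝ) :
    BddAbove (Set.range fun x : {x : Fin r → ℝ // x ≠ 0} =>
      l1norm (M.mulVec x.1) / l1norm x.1) := by
  refine ⟨∑ i, ∑ j, |M i j|, ?_⟩
  rintro y ⟨x, rfl⟩
  rw [div_le_iff₀ (l1_pos x.2)]
  exact mulVec_l1_le M x.1

lemma colsum_le_matnorm {q r : ℕ} (M : Matrix (Fin q) (Fin r) ℝ) (i : Fin r) :
    ∑ j, |M j i| ≤ matnorm11 M := by
  set x : Fin r → ℝ := Pi.single i 1 with hxdef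
  have hx : x ≠ 0 := by
    intro h
    have := congrFun h i
    simp [hxdef] at this
  have hl1 : l1norm x = 1 := by
    rw [l1norm]
    rw [Finset.sum_eq_single i]
    · simp [hxdef]
    · intro j _ hj; simp [hxdef, Pi.single_apply, hj]
    · intro h; exact absurd (Finset.mem_univ i) h
  have hmv : M.mulVec x = fun j => M j i := by
    funext j
    simp [hxdef, Matrix.mulVec_single]
  have hle := le_ciSup (matnorm_bdd M) (⟨x, hx⟩ : {x : Fin r → ℝ // x ≠ 0})
  rw [show matnorm11 M = ⨆ x : {x : Fin r → ℝ // x ≠ 0},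
      l1norm (M.mulVec x.1) / l1norm x.1 from rfl] at *
  calc ∑ j, |M j i| = l1norm (M.mulVec x) / l1norm x := by
        rw [hl1, hmv, div_one]; rfl
  _ ≤ _ := hle

lemma matnorm_nonneg {q r : ℕ} (M : Matrix (Fin q) (Fin r) ℝ) (i : Fin r) :
    0 ≤ matnorm11 M :=
  le_trans (Finset.sum_nonneg fun _ _ => abs_nonneg _) (colsum_le_matnorm M i)

lemma abs_le_linf (v : Fin k → ℝ) (i : Fin k) : |v i| ≤ linfnorm v := by
  have := le_ciSup (f := fun j => |v j|) (Set.Finite.bddAbove (Set.finite_range _)) i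
  simpa [linfnorm] using this

lemma mulVec_inf_bound {q : ℕ} (M : Matrix (Fin q) (Fin q) ℝ) (hsym : Mᵀ = M)
    (v : Fin q → ℝ) (c : ℝ) (hv : ∀ j, |v j| ≤ c) (i : Fin q) :
    |M.mulVec v i| ≤ matnorm11 M * c := by
  have hc : 0 ≤ c := le_trans (abs_nonneg _) (hv i)
  calc |M.mulVec v i| = |∑ j, M i j * v j| := rfl
  _ ≤ ∑ j, |M i j * v j| := Finset.abs_sum_le_sum_abs _ _
  _ ≤ ∑ j, |M i j| * c := by
      apply Finset.sum_le_sum; intro j _; rw [abs_mul]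
      exact mul_le_mul_of_nonneg_left (hv j) (abs_nonneg _)
  _ = (∑ j, |M j i|) * c := by
      rw [Finset.sum_mul]
      apply Finset.sum_congr rfl; intro j _
      congr 1
      rw [show M i j = Mᵀ j i from rfl, hsym]
  _ ≤ matnorm11 M * c := mul_le_mul_of_nonneg_right (colsum_le_matnorm M i) hc

-- one variable soft threshold
lemma one_var_min {lam ρ a c : ℝ} (hlam : 0 < lam) (hρ : 0 < ρ)
    (h : ∀ t : ℝ, lam * |a| + ρ/2 * (a - c)^2 ≤ lam * |t| + ρ/2 * (t - c)^2) :
    |a - c| ≤ lam / ρ := by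
  have hL : 0 < lam / ρ := div_pos hlam hρ
  have hcancel : ρ * (lam/ρ) = lam := by field_simp
  rw [abs_le]
  constructor
  · by_contra hd; push_neg at hd
    have ht := h (c - lam/ρ)
    have habs : |c - lam/ρ| - |a| ≤ |c - lam/ρ - a| := abs_sub_abs_le_abs_sub _ _
    have habs2 : |c - lam/ρ - a| = c - lam/ρ - a := abs_of_pos (by linarith)
    have h1 : lam * |c - lam/ρ| ≤ lam * |a| + lam * (c - lam/ρ - a) := by
      have := mul_le_mul_of_nonneg_left (show |c - lam/ρ| ≤ |a| + (c - lam/ρ - a) by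
        rw [← habs2]; linarith) hlam.le
      linarith [this]
    have key : ρ/2 * (a - c)^2 ≤ lam * (c - lam/ρ - a) + ρ/2 * (c - lam/ρ - c)^2 := by
      linarith
    have hne : (a - c) + lam/ρ < 0 := by linarith
    have h2 : 0 < ((a - c) + lam/ρ) * ((a - c) + lam/ρ) := mul_pos_of_neg_of_neg hne hne
    nlinarith [key, hcancel, h2]
  · by_contra hd; push_neg at hd
    have ht := h (c + lam/ρ)
    have habs : |c + lam/ρ| - |a| ≤ |c + lam/ρ - a| := abs_sub_abs_le_abs_sub _ _
    have habs2 : |c + lam/ρ - a| = a - c - lam/ρ := by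
      rw [abs_of_neg (by linarith)]; ring
    have h1 : lam * |c + lam/ρ| ≤ lam * |a| + lam * (a - c - lam/ρ) := by
      have := mul_le_mul_of_nonneg_left (show |c + lam/ρ| ≤ |a| + (a - c - lam/ρ) by
        rw [← habs2]; linarith) hlam.le
      linarith [this]
    have key : ρ/2 * (a - c)^2 ≤ lam * (a - c - lam/ρ) + ρ/2 * (c + lam/ρ - c)^2 := by
      linarith
    have hne : 0 < (a - c) - lam/ρ := by linarith
    have h2 : 0 < ((a - c) - lam/ρ) * ((a - c) - lam/ρ) := mul_pos hne hne
    nlinarith [key, hcancel, h2]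

-- sum over update
lemma sum_update_g (F : Fin k → ℝ) (i : Fin k) (c : ℝ) (g : ℝ → ℝ) :
    ∑ j, g (Function.update F i c j) = (∑ j, g (F j)) - g (F i) + g c := by
  have h1 : (fun j => g (Function.update F i c j))
      = Function.update (fun j => g (F j)) i (g c) := by
    funext j
    by_cases hj : j = i
    · subst hj; simp
    · simp [Function.update_apply, hj]
  rw [h1, Finset.sum_update_of_mem (Finset.mem_univ i)]
  rw [Finset.sdiff_singleton_eq_erase]
  have := Finset.add_sum_erase Finset.univ (fun j => g (F j)) (Finset.mem_univ i)
  linarith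

lemma norm_add_smul (u w : Fin k → ℝ) (t : ℝ) :
    (l2norm (u + t • w))^2 = (l2norm u)^2 + 2*t*(u ⬝ᵥ w) + t^2*(l2norm w)^2 := by
  rw [← dot_self, ← dot_self, ← dot_self]
  have h := dot_expand 1 t u w
  simpa using h

lemma quad_min_zero {L Q : ℝ} (hQ : 0 ≤ Q) (h : ∀ t : ℝ, 0 ≤ t * L + t^2 * Q) : L = 0 := by
  have key : ∀ M : ℝ, (∀ t, 0 ≤ t * M + t^2 * Q) → M ≤ 0 := by
    intro M hM
    have h2 : ∀ ε : ℝ, 0 < ε → M ≤ ε * Q := by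
      intro ε hε
      have hh := hM (-ε)
      nlinarith [hh]
    refine le_of_forall_pos_le_add ?_
    intro δ hδ
    have hQ1 : 0 < Q + 1 := by linarith
    have hε : 0 < δ / (Q+1) := div_pos hδ hQ1
    have h3 := h2 _ hε
    have h4 : δ/(Q+1)*Q ≤ δ := by
      rw [div_mul_eq_mul_div, div_le_iff₀ hQ1]; nlinarith
    linarith
  have h1 : L ≤ 0 := key L h
  have h2 : -L ≤ 0 := key (-L) (fun t => by nlinarith [h (-t)])
  linarith

lemma grad_zero {m n pp : ℕ} (A : Matrix (Fin m) (Fin n) ℝ) (D : Matrix (Fin n) (Fin pp) ℝ)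
    (ρ : ℝ) (hρ : 0 < ρ) (b : Fin m → ℝ) (zh : Fin pp → ℝ) (xh : Fin n → ℝ)
    (hmin2 : ∀ y : Fin n → ℝ,
      1/2*(l2norm (A.mulVec xh - b))^2 + ρ/2*(l2norm (zh - Dᵀ.mulVec xh))^2
      ≤ 1/2*(l2norm (A.mulVec y - b))^2 + ρ/2*(l2norm (zh - Dᵀ.mulVec y))^2) :
    Aᵀ.mulVec (A.mulVec xh - b) = ρ • D.mulVec (zh - Dᵀ.mulVec xh) := by
  set r := A.mulVec xh - b with hr
  set u' := zh - Dᵀ.mulVec xh with hu'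
  have key : ∀ v : Fin n → ℝ,
      r ⬝ᵥ (A.mulVec v) - ρ * (u' ⬝ᵥ (Dᵀ.mulVec v)) = 0 := by
    intro v
    set L := r ⬝ᵥ (A.mulVec v) - ρ * (u' ⬝ᵥ (Dᵀ.mulVec v)) with hL
    set Q := 1/2*(l2norm (A.mulVec v))^2 + ρ/2*(l2norm (Dᵀ.mulVec v))^2 with hQ
    have hQnn : 0 ≤ Q := by
      rw [hQ]
      have : 0 ≤ ρ/2 := by linarith
      positivity
    apply quad_min_zero hQnn
    intro t
    have hm := hmin2 (xh + t • v)
    have eq1 : A.mulVec (xh + t • v) - b = r + t • (A.mulVec v) := by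
      rw [Matrix.mulVec_add, Matrix.mulVec_smul, hr]
      funext i; simp; ring
    have eq2 : zh - Dᵀ.mulVec (xh + t • v) = u' + (-t) • (Dᵀ.mulVec v) := by
      rw [Matrix.mulVec_add, Matrix.mulVec_smul, hu']
      funext i; simp; ring
    rw [eq1, eq2, norm_add_smul, norm_add_smul] at hm
    rw [hL, hQ]
    nlinarith [hm]
  have keyG : ∀ v : Fin n → ℝ,
      v ⬝ᵥ (Aᵀ.mulVec r - ρ • D.mulVec u') = 0 := by
    intro v
    have h1 := key v
    have e1 : r ⬝ᵥ (A.mulVec v) = v ⬝ᵥ (Aᵀ.mulVec r) := by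
      rw [dotProduct_comm, adj]
    have e2 : u' ⬝ᵥ (Dᵀ.mulVec v) = v ⬝ᵥ (D.mulVec u') := by
      rw [dotProduct_comm, adj, Matrix.transpose_transpose]
    rw [e1, e2] at h1
    rw [dotProduct_sub, dotProduct_smul, smul_eq_mul]
    linarith
  set G := Aᵀ.mulVec r - ρ • D.mulVec u' with hG
  have hGG : G ⬝ᵥ G = 0 := keyG G
  have hG0 : G = 0 := by
    apply l2_eq_zero
    have := hGG
    rw [dot_self] at this
    exact pow_eq_zero_iff (two_ne_zero) |>.1 this
  have := sub_eq_zero.1 hG0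
  exact this
/-- chunks of size s'+1 -/
def chunks (s' : ℕ) : List (Fin k) → List (Finset (Fin k))
  | [] => []
  | a :: rest => ((a :: rest).take (s'+1)).toFinset :: chunks s' (rest.drop s')
  termination_by l => l.length
  decreasing_by simp [List.length_drop]

lemma chunks_nil (s' : ℕ) : chunks s' ([] : List (Fin k)) = [] := by rw [chunks.eq_1]

lemma chunks_cons (s' : ℕ) (a : Fin k) (rest : List (Fin k)) :
    chunks s' (a :: rest)
      = ((a :: rest).take (s'+1)).toFinset :: chunks s' ((a :: rest).drop (s'+1)) := by
  rw [chunks.eq_2]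
  simp [List.drop_succ_cons]

lemma chunks_mem (s' : ℕ) :
    ∀ N (l : List (Fin k)), l.length ≤ N → ∀ B ∈ chunks s' l,
      B ⊆ l.toFinset ∧ B.card ≤ s'+1 := by
  intro N
  induction N with
  | zero =>
    intro l hl B hB
    have : l = [] := List.eq_nil_of_length_eq_zero (by omega)
    subst this
    rw [chunks_nil] at hB
    simp at hB
  | succ N ih =>
    intro l hl B hB
    match l with
    | [] => rw [chunks_nil] at hB; simp at hB
    | a :: rest =>
      rw [chunks_cons] at hB
      rcases List.mem_cons.1 hB with rfl | hB'
      · refine ⟨fun i hi => ?_, ?_⟩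
        · rw [List.mem_toFinset] at hi ⊢
          exact List.take_subset _ _ hi
        · calc ((a :: rest).take (s'+1)).toFinset.card
              ≤ ((a :: rest).take (s'+1)).length := List.toFinset_card_le _
          _ ≤ s'+1 := by simp
      · have hlen : ((a :: rest).drop (s'+1)).length ≤ N := by
          simp [List.length_drop] at hl ⊢; omega
        obtain ⟨h1, h2⟩ := ih _ hlen B hB'
        refine ⟨fun i hi => ?_, h2⟩
        have := h1 hi
        rw [List.mem_toFinset] at this ⊢
        exact List.drop_subset _ _ this

lemma chunks_sum (s' : ℕ) (y : Fin k → ℝ) :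
    ∀ N (l : List (Fin k)), l.length ≤ N → l.Nodup →
      ((chunks s' l).map (fun B => restr B y)).sum = restr l.toFinset y := by
  intro N
  induction N with
  | zero =>
    intro l hl _
    have : l = [] := List.eq_nil_of_length_eq_zero (by omega)
    subst this
    rw [chunks_nil]
    funext i; simp [restr]
  | succ N ih =>
    intro l hl hnd
    match l with
    | [] =>
      rw [chunks_nil]; funext i; simp [restr]
    | a :: rest =>
      rw [chunks_cons]
      have hlen : ((a :: rest).drop (s'+1)).length ≤ N := by
        simp [List.length_drop] at hl ⊢; omega
      have hnd' : ((a :: rest).drop (s'+1)).Nodup := hnd.sublist (List.drop_sublist _ _)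
      rw [List.map_cons, List.sum_cons, ih _ hlen hnd']
      have hdisj : List.Disjoint ((a :: rest).take (s'+1)) ((a :: rest).drop (s'+1)) :=
        List.disjoint_take_drop hnd (le_refl _)
      funext i
      simp only [Pi.add_apply, restr, List.mem_toFinset]
      by_cases h1 : i ∈ (a :: rest).take (s'+1)
      · have h2 : i ∉ (a :: rest).drop (s'+1) := fun h => hdisj h1 h
        have h3 : i ∈ (a :: rest) := List.take_subset _ _ h1
        rw [if_pos h1, if_neg h2, if_pos h3, add_zero]
      · by_cases h2 : i ∈ (a :: rest).drop (s'+1)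
        · have h3 : i ∈ (a :: rest) := List.drop_subset _ _ h2
          rw [if_neg h1, if_pos h2, if_pos h3, zero_add]
        · have h3 : i ∉ (a :: rest) := by
            intro h
            rcases List.mem_append.1 (by rw [List.take_append_drop (s'+1) (a::rest)]; exact h :
              i ∈ (a :: rest).take (s'+1) ++ (a :: rest).drop (s'+1)) with h' | h'
            exacts [h1 h', h2 h']
          rw [if_neg h1, if_neg h2, if_neg h3, add_zero]

lemma chunks_tail_bound (s' : ℕ) (y : Fin k → ℝ) :
    ∀ N (l : List (Fin k)), l.length ≤ N →
      l.Pairwise (fun a b => |y b| ≤ |y a|) → l.Nodup →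
      ((chunks s' (l.drop (s'+1))).map (fun B => l2norm (restr B y))).sum
        ≤ (∑ i ∈ l.toFinset, |y i|) / Real.sqrt (s'+1) := by
  intro N
  induction N with
  | zero =>
    intro l hl _ _
    have : l = [] := List.eq_nil_of_length_eq_zero (by omega)
    subst this
    simp [chunks_nil]
  | succ N ih =>
    intro l hl hsort hnd
    by_cases hshort : l.length ≤ s'+1
    · have : l.drop (s'+1) = [] := List.drop_eq_nil_of_le hshort
      rw [this, chunks_nil]
      simp only [List.map_nil, List.sum_nil]
      apply div_nonneg (Finset.sum_nonneg fun _ _ => abs_nonneg _) (Real.sqrt_nonneg _)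
    · push_neg at hshort
      obtain ⟨a, rest, har⟩ : ∃ a rest, l.drop (s'+1) = a :: rest := by
        cases h : l.drop (s'+1) with
        | nil =>
          exfalso
          have := List.length_drop (i := s'+1) (l := l)
          rw [h] at this
          simp at this
          omega
        | cons a rest => exact ⟨a, rest, rfl⟩
      rw [har, chunks_cons, List.map_cons, List.sum_cons]
      set F₁ := (l.take (s'+1)).toFinset with hF₁
      set C := ((a :: rest).take (s'+1)).toFinset with hC
      have hsq : (0:ℝ) < Real.sqrt (s'+1) := Real.sqrt_pos.2 (by positivity)
      have hcardF₁ : F₁.card = s'+1 := by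
        rw [hF₁, List.toFinset_card_of_nodup (hnd.sublist (List.take_sublist _ _))]
        simp [List.length_take]; omega
      have horder : ∀ i ∈ F₁, ∀ j ∈ C, |y j| ≤ |y i| := by
        intro i hi j hj
        rw [hF₁, List.mem_toFinset] at hi
        rw [hC, List.mem_toFinset] at hj
        have hj' : j ∈ l.drop (s'+1) := by
          rw [har]; exact List.take_subset _ _ hj
        have hpa := List.pairwise_append.1
          (by rw [List.take_append_drop (s'+1) l]; exact hsort)
        exact hpa.2.2 i hi j hj'
      set M : ℝ := (∑ i ∈ F₁, |y i|) / (s'+1) with hM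
      have hMnn : 0 ≤ M := by
        apply div_nonneg (Finset.sum_nonneg fun _ _ => abs_nonneg _) (by positivity)
      have hCM : ∀ j ∈ C, |y j| ≤ M := by
        intro j hj
        rw [hM, le_div_iff₀ (by positivity : (0:ℝ) < ((s':ℝ)+1))]
        calc |y j| * ((s':ℝ)+1) = ∑ _i ∈ F₁, |y j| := by
              rw [Finset.sum_const, hcardF₁]; push_cast; ring
        _ ≤ ∑ i ∈ F₁, |y i| := Finset.sum_le_sum fun i hi => horder i hi j hj
      have hfirst2 : l2norm (restr C y) ≤ (∑ i ∈ F₁, |y i|) / Real.sqrt (s'+1) := by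
        have hfirst : l2norm (restr C y) ≤ Real.sqrt (s'+1) * M := by
          calc l2norm (restr C y) ≤ Real.sqrt C.card * M :=
                l2_le_sqrt_card_mul_max C y M hMnn hCM
          _ ≤ Real.sqrt (s'+1) * M := by
              apply mul_le_mul_of_nonneg_right _ hMnn
              apply Real.sqrt_le_sqrt
              have hcc : C.card ≤ s'+1 := by
                calc C.card ≤ ((a :: rest).take (s'+1)).length := List.toFinset_card_le _
                _ ≤ s'+1 := by simp
              exact_mod_cast hcc
        calc l2norm (restr C y) ≤ Real.sqrt (s'+1) * M := hfirst
        _ = (∑ i ∈ F₁, |y i|) / Real.sqrt (s'+1) := by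
            rw [hM, eq_div_iff (ne_of_gt hsq)]
            have h2 : Real.sqrt ((s':ℝ)+1) * Real.sqrt ((s':ℝ)+1) = (s':ℝ)+1 :=
              Real.mul_self_sqrt (by positivity)
            have h3 : ((s':ℝ)+1) ≠ 0 := by positivity
            field_simp
            linear_combination (∑ i ∈ F₁, |y i|) * h2
      -- recursive part via IH on l.drop (s'+1)
      have hlen2 : (l.drop (s'+1)).length ≤ N := by
        rw [List.length_drop]; omega
      have hsort2 : (l.drop (s'+1)).Pairwise (fun a b => |y b| ≤ |y a|) :=
        hsort.sublist (List.drop_sublist _ _)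
      have hnd2 : (l.drop (s'+1)).Nodup := hnd.sublist (List.drop_sublist _ _)
      have hrec := ih (l.drop (s'+1)) hlen2 hsort2 hnd2
      rw [har] at hrec
      -- combine
      have hunion : l.toFinset = F₁ ∪ (a :: rest).toFinset := by
        ext i
        rw [Finset.mem_union, hF₁, List.mem_toFinset, List.mem_toFinset, List.mem_toFinset,
          ← har]
        constructor
        · intro hi
          rcases List.mem_append.1 (by rw [List.take_append_drop (s'+1) l]; exact hi :
            i ∈ l.take (s'+1) ++ l.drop (s'+1)) with h' | h'
          exacts [Or.inl h', Or.inr h']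
        · rintro (h' | h')
          exacts [List.take_subset _ _ h', List.drop_subset _ _ h']
      have hdisj2 : Disjoint F₁ ((a :: rest).toFinset) := by
        rw [Finset.disjoint_left]
        intro i hi hi2
        rw [hF₁, List.mem_toFinset] at hi
        rw [List.mem_toFinset, ← har] at hi2
        exact List.disjoint_take_drop hnd (le_refl _) hi hi2
      have hsum : ∑ i ∈ l.toFinset, |y i|
          = (∑ i ∈ F₁, |y i|) + ∑ i ∈ (a :: rest).toFinset, |y i| := by
        rw [hunion, Finset.sum_union hdisj2]
      have hrec2 : ((chunks s' ((a :: rest).drop (s'+1))).map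
          (fun B => l2norm (restr B y))).sum
          ≤ (∑ i ∈ (a :: rest).toFinset, |y i|) / Real.sqrt (s'+1) := hrec
      rw [hsum, add_div]
      exact add_le_add hfirst2 hrec2

lemma exists_blocks (s : ℕ) (hs : 1 ≤ s) (y : Fin k → ℝ) (S : Finset (Fin k)) :
    ∃ (T₁ : Finset (Fin k)) (Bs : List (Finset (Fin k))),
      T₁ ⊆ S ∧ T₁.card ≤ s ∧
      (∀ B ∈ Bs, B.card ≤ s) ∧
      (restr S y = restr T₁ y + (Bs.map (fun B => restr B y)).sum) ∧
      ((Bs.map (fun B => l2norm (restr B y))).sum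
        ≤ (∑ i ∈ S, |y i|) / Real.sqrt (s : ℝ)) := by
  obtain ⟨s', rfl⟩ : ∃ s', s = s' + 1 := ⟨s - 1, by omega⟩
  set le : Fin k → Fin k → Bool := fun a b => decide (|y b| ≤ |y a|) with hle
  set l := S.toList.mergeSort le with hldef
  have hperm : l.Perm S.toList := List.mergeSort_perm S.toList le
  have htrans : ∀ a b c : Fin k, le a b = true → le b c = true → le a c = true := by
    intro a b c hab hbc
    simp only [hle, decide_eq_true_eq] at *
    linarith
  have htot : ∀ a b : Fin k, (le a b || le b a) = true := by
    intro a b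
    simp only [hle, Bool.or_eq_true, decide_eq_true_eq]
    exact le_total _ _
  have hsorted : l.Pairwise (fun a b => |y b| ≤ |y a|) := by
    have h1 := List.pairwise_mergeSort (le := le) htrans htot S.toList
    exact h1.imp (fun h => by simpa [hle] using h)
  have hnodup : l.Nodup := (hperm.nodup_iff).2 S.nodup_toList
  have hlS : l.toFinset = S := by
    ext i; rw [List.mem_toFinset, hperm.mem_iff, Finset.mem_toList]
  refine ⟨(l.take (s'+1)).toFinset, chunks s' (l.drop (s'+1)), ?_, ?_, ?_, ?_, ?_⟩
  · intro i hi
    rw [List.mem_toFinset] at hi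
    rw [← hlS, List.mem_toFinset]
    exact List.take_subset _ _ hi
  · calc (l.take (s'+1)).toFinset.card ≤ (l.take (s'+1)).length := List.toFinset_card_le _
    _ ≤ s'+1 := by simp
  · intro B hB
    exact (chunks_mem s' _ (l.drop (s'+1)) (le_refl _) B hB).2
  · rw [chunks_sum s' y _ (l.drop (s'+1)) (le_refl _) (hnodup.sublist (List.drop_sublist _ _))]
    have hdisj := List.disjoint_take_drop (l := l) (m := s'+1) (n := s'+1) hnodup (le_refl _)
    funext i
    simp only [Pi.add_apply, restr, List.mem_toFinset, ← hlS]
    by_cases h1 : i ∈ l.take (s'+1)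
    · have h2 : i ∉ l.drop (s'+1) := fun h => hdisj h1 h
      have h3 : i ∈ l := List.take_subset _ _ h1
      rw [if_pos h3, if_pos h1, if_neg h2, add_zero]
    · by_cases h2 : i ∈ l.drop (s'+1)
      · have h3 : i ∈ l := List.drop_subset _ _ h2
        rw [if_pos h3, if_neg h1, if_pos h2, zero_add]
      · have h3 : i ∉ l := by
          intro h
          rcases List.mem_append.1 (by rw [List.take_append_drop (s'+1) l]; exact h :
            i ∈ l.take (s'+1) ++ l.drop (s'+1)) with h' | h'
          exacts [h1 h', h2 h']
        rw [if_neg h3, if_neg h1, if_neg h2, add_zero]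
  · have htb := chunks_tail_bound s' y l.length l (le_refl _) hsorted hnodup
    rw [hlS] at htb
    have hcast : ((s'+1 : ℕ) : ℝ) = (s' : ℝ) + 1 := by push_cast; ring
    rw [hcast]
    exact htb


lemma l0_neg (v : Fin k → ℝ) : l0norm (-v) = l0norm v := by
  unfold l0norm
  congr 1
  apply Finset.filter_congr
  intro i _
  simp

lemma l2_neg (v : Fin k → ℝ) : l2norm (-v) = l2norm v := by
  simp [l2norm]

lemma list_sum_add {γ : Type*} (L : List γ) (f h : γ → ℝ) :
    (L.map (fun x => f x + h x)).sum = (L.map f).sum + (L.map h).sum := by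
  induction L with
  | nil => simp
  | cons a t ih => simp [ih]; ring

lemma list_sum_neg {γ : Type*} (L : List γ) (f : γ → ℝ) :
    (L.map (fun x => -(f x))).sum = -((L.map f).sum) := by
  induction L with
  | nil => simp
  | cons a t ih => simp [ih]; ring

lemma list_sum_mul_left {γ : Type*} (C : ℝ) (L : List γ) (f : γ → ℝ) :
    (L.map (fun x => C * f x)).sum = C * (L.map f).sum := by
  induction L with
  | nil => simp
  | cons a t ih => simp [ih]; ring

lemma list_mulVec_sum {q r : ℕ} (M : Matrix (Fin q) (Fin r) ℝ) {γ : Type*}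
    (L : List γ) (f : γ → Fin r → ℝ) :
    M.mulVec (L.map f).sum = (L.map (fun x => M.mulVec (f x))).sum := by
  induction L with
  | nil => simp
  | cons a t ih => simp [Matrix.mulVec_add, ih]

lemma list_dot_sum {q : ℕ} (u : Fin q → ℝ) {γ : Type*} (L : List γ) (f : γ → Fin q → ℝ) :
    u ⬝ᵥ (L.map f).sum = (L.map (fun x => u ⬝ᵥ f x)).sum := by
  induction L with
  | nil => simp
  | cons a t ih => simp [dotProduct_add, ih]

end RalassoAux

-- ==================== Main theorem ====================

set_option maxHeartbeats 2000000 in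
open RalassoAux Matrix in
/-- quantitative tail bound `‖Dᵀ_{T^c}h‖₁ ≤ …` for the RALASSO error
`h = x̂_ρ − x`, where `T` indexes the `s` largest-magnitude entries of `Dᵀx`. -/
theorem ralasso_tail_l1_bound
    {m n p s : ℕ} (hs : 1 ≤ s)
    (A : Matrix (Fin m) (Fin n) ℝ) (D : Matrix (Fin n) (Fin p) ℝ)
    (htf : D * D.transpose = 1) (σ : ℝ)
    (hA : DRIP A D (2 * s) σ) (hσ : σ < 1 / (1 + 3 * Real.sqrt 2))
    (lam ρ : ℝ) (hlam : 0 < lam) (hρ : 0 < ρ)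
    (x : Fin n → ℝ) (w b : Fin m → ℝ) (hb : b = A.mulVec x + w)
    (hw : linfnorm (D.transpose.mulVec (A.transpose.mulVec w)) ≤ lam / 2)
    (xh : Fin n → ℝ) (zh : Fin p → ℝ)
    (hmin : ∀ (y : Fin n → ℝ) (z : Fin p → ℝ),
      1 / 2 * (l2norm (A.mulVec xh - b)) ^ 2 + lam * l1norm zh
          + ρ / 2 * (l2norm (zh - D.transpose.mulVec xh)) ^ 2
        ≤ 1 / 2 * (l2norm (A.mulVec y - b)) ^ 2 + lam * l1norm z
          + ρ / 2 * (l2norm (z - D.transpose.mulVec y)) ^ 2)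
    (T : Finset (Fin p)) (hTcard : T.card = s)
    (hTbig : ∀ i ∈ T, ∀ j ∈ Tᶜ,
      |D.transpose.mulVec x j| ≤ |D.transpose.mulVec x i|) :
    l1norm (restr Tᶜ (D.transpose.mulVec (xh - x)))
      ≤ (1 - σ) / (1 - (1 + 3 * Real.sqrt 2) * σ) * (lam / ρ) * p
        + (3 * Real.sqrt 2 * lam * s * (1 / 2 + matnorm11 (D.transpose * D))
            + 4 * (1 - σ) * l1norm (restr Tᶜ (D.transpose.mulVec x)))
          / (1 - (1 + 3 * Real.sqrt 2) * σ) := by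
  classical
  have hsqrt2 : (0:ℝ) < Real.sqrt 2 := by positivity
  have hp1 : 1 ≤ p := by
    have h1 := Finset.card_le_card (Finset.subset_univ T)
    rw [hTcard, Finset.card_univ, Fintype.card_fin] at h1
    omega
  have i₀ : Fin p := ⟨0, by omega⟩
  have hmatnn : 0 ≤ matnorm11 (D.transpose * D) := matnorm_nonneg _ i₀
  have hc₀nn : (0:ℝ) ≤ 1/2 + matnorm11 (D.transpose * D) := by linarith
  have hK : 0 < 1 - (1 + 3*Real.sqrt 2) * σ := by
    have h1 : (0:ℝ) < 1 + 3*Real.sqrt 2 := by positivity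
    have h2 := (lt_div_iff₀ h1).1 hσ
    nlinarith
  have hσ1 : σ < 1 := by
    have h1 : (0:ℝ) < 1 + 3*Real.sqrt 2 := by positivity
    have h2 := (lt_div_iff₀ h1).1 hσ
    nlinarith
  -- notation
  set g : Fin p → ℝ := D.transpose.mulVec (xh - x) with hgdef
  set X : ℝ := l1norm (restr Tᶜ g) with hXdef
  set Zc : ℝ := l1norm (restr Tᶜ (D.transpose.mulVec x)) with hZcdef
  clear_value g X Zc
  have hXnn : 0 ≤ X := by rw [hXdef]; exact l1nn _
  have hZcnn : 0 ≤ Zc := by rw [hZcdef]; exact l1nn _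
  -- case σ < 0 : D must vanish
  rcases lt_or_ge σ 0 with hσneg | hσnn
  · have hD0 : D = 0 := by
      ext i j
      have hl0 : l0norm (Pi.single j (1:ℝ)) ≤ 2 * s := by
        have h1 : l0norm (Pi.single j (1:ℝ)) ≤ ({j} : Finset (Fin p)).card := by
          apply l0_le_card
          intro i' hi'
          rw [Finset.mem_singleton]
          by_contra hne
          exact hi' (Pi.single_eq_of_ne hne 1)
        rw [Finset.card_singleton] at h1
        omega
      obtain ⟨hlow, hup⟩ := hA (Pi.single j 1) hl0
      have hE : (l2norm (D.mulVec (Pi.single j 1)))^2 = 0 := by nlinarith [sq_nonneg (l2norm (D.mulVec (Pi.single j 1)))]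
      have hE2 : l2norm (D.mulVec (Pi.single j 1)) = 0 :=
        pow_eq_zero_iff two_ne_zero |>.1 hE
      have hE3 := l2_eq_zero hE2
      have := congrFun hE3 i
      rw [Matrix.mulVec_single] at this
      simpa using this
    have hg0 : g = 0 := by
      rw [hgdef, hD0, Matrix.transpose_zero, Matrix.zero_mulVec]
    have hX0 : X = 0 := by
      rw [hXdef, hg0]
      rw [l1_restr]
      simp
    rw [hX0]
    apply add_nonneg
    · apply mul_nonneg
      apply mul_nonneg
      · apply div_nonneg (by linarith) hK.le
      · exact (div_pos hlam hρ).le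
      · exact Nat.cast_nonneg p
    · apply div_nonneg _ hK.le
      apply add_nonneg
      · apply mul_nonneg _ hc₀nn
        apply mul_nonneg _ (Nat.cast_nonneg s)
        positivity
      · apply mul_nonneg (by linarith) hZcnn
  -- main case : σ ≥ 0
  -- Step A : soft threshold bound
  have hu : ∀ i, |zh i - (D.transpose.mulVec xh) i| ≤ lam / ρ := by
    intro i
    apply one_var_min hlam hρ
    intro t
    have hm := hmin xh (Function.update zh i t)
    have e1 : l1norm (Function.update zh i t) = l1norm zh - |zh i| + |t| := by
      have h1 := sum_update_g zh i t (fun r => |r|)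
      simpa [l1norm] using h1
    have e2 : Function.update zh i t - D.transpose.mulVec xh
        = Function.update (zh - D.transpose.mulVec xh) i (t - (D.transpose.mulVec xh) i) := by
      funext j
      by_cases hj : j = i
      · subst hj; simp
      · simp [Function.update_apply, hj]
    have e3 : (l2norm (Function.update zh i t - D.transpose.mulVec xh))^2
        = (l2norm (zh - D.transpose.mulVec xh))^2
          - (zh i - (D.transpose.mulVec xh) i)^2 + (t - (D.transpose.mulVec xh) i)^2 := by
      rw [e2, l2sq, l2sq]
      have h1 := sum_update_g (zh - D.transpose.mulVec xh) i
        (t - (D.transpose.mulVec xh) i) (fun r => r^2)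
      simpa using h1
    rw [e1, e3] at hm
    nlinarith [hm]
  -- Step B : gradient identity and K-vector bound
  have hmin2 : ∀ y : Fin n → ℝ,
      1/2*(l2norm (A.mulVec xh - b))^2 + ρ/2*(l2norm (zh - Dᵀ.mulVec xh))^2
      ≤ 1/2*(l2norm (A.mulVec y - b))^2 + ρ/2*(l2norm (zh - Dᵀ.mulVec y))^2 := by
    intro y
    have hm := hmin y zh
    linarith
  have hgrad := grad_zero A D ρ hρ b zh xh hmin2
  have hsym : (Dᵀ * D)ᵀ = Dᵀ * D := by
    rw [Matrix.transpose_mul, Matrix.transpose_transpose]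
  have hAxh : A.mulVec (xh - x) = (A.mulVec xh - b) + w := by
    rw [hb, Matrix.mulVec_sub]
    funext i; simp; ring
  have hKvec : ∀ i, |(Dᵀ.mulVec (Aᵀ.mulVec (A.mulVec (xh - x)))) i|
      ≤ lam * (1/2 + matnorm11 (Dᵀ * D)) := by
    intro i
    rw [hAxh, Matrix.mulVec_add (Aᵀ), Matrix.mulVec_add (Dᵀ), hgrad]
    have e4 : Dᵀ.mulVec (ρ • D.mulVec (zh - Dᵀ.mulVec xh))
        = ρ • (Dᵀ * D).mulVec (zh - Dᵀ.mulVec xh) := by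
      rw [Matrix.mulVec_smul, Matrix.mulVec_mulVec]
    rw [e4]
    have h5 : |((Dᵀ*D).mulVec (zh - Dᵀ.mulVec xh)) i| ≤ matnorm11 (Dᵀ*D) * (lam/ρ) :=
      mulVec_inf_bound _ hsym _ _ (fun j => by simpa using hu j) i
    have h6 : |(Dᵀ.mulVec (Aᵀ.mulVec w)) i| ≤ lam / 2 :=
      le_trans (abs_le_linf _ i) hw
    have habs : |(ρ • (Dᵀ*D).mulVec (zh - Dᵀ.mulVec xh) + Dᵀ.mulVec (Aᵀ.mulVec w)) i|
        ≤ |(ρ • (Dᵀ*D).mulVec (zh - Dᵀ.mulVec xh)) i| + |(Dᵀ.mulVec (Aᵀ.mulVec w)) i| := by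
      rw [Pi.add_apply]
      exact abs_add_le _ _
    have h7 : |(ρ • (Dᵀ*D).mulVec (zh - Dᵀ.mulVec xh)) i|
        ≤ ρ * (matnorm11 (Dᵀ*D) * (lam/ρ)) := by
      rw [Pi.smul_apply, smul_eq_mul, abs_mul, abs_of_pos hρ]
      exact mul_le_mul_of_nonneg_left h5 hρ.le
    have hcc : ρ * (matnorm11 (Dᵀ*D) * (lam/ρ)) = lam * matnorm11 (Dᵀ*D) := by
      field_simp
    calc |(ρ • (Dᵀ*D).mulVec (zh - Dᵀ.mulVec xh) + Dᵀ.mulVec (Aᵀ.mulVec w)) i|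
        ≤ ρ * (matnorm11 (Dᵀ*D) * (lam/ρ)) + lam/2 := le_trans habs (add_le_add h7 h6)
    _ = lam * (1/2 + matnorm11 (Dᵀ*D)) := by rw [hcc]; ring
  -- basic identities
  have hDg : D.mulVec g = xh - x := by rw [hgdef, DDt_apply D htf]
  -- Step C : cone constraint
  have hcone : X ≤ 3 * l1norm (restr T g) + 4 * Zc + lam/ρ * p := by
    have hm := hmin x (Dᵀ.mulVec x)
    have e7 : A.mulVec x - b = -w := by rw [hb]; funext i; simp
    rw [e7, sub_self] at hm
    have e9 : l2norm (0 : Fin p → ℝ) = 0 := by simp [l2norm]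
    have e10 : (l2norm (-w))^2 = (l2norm w)^2 := by rw [l2sq, l2sq]; simp
    rw [e9, e10] at hm
    -- fidelity lower bound
    have hq : A.mulVec xh - b = A.mulVec (D.mulVec g) + (-1 : ℝ) • w := by
      rw [hDg, hb, Matrix.mulVec_sub]
      funext i; simp; ring
    have hfid : (l2norm w)^2 - 2*((A.mulVec (D.mulVec g)) ⬝ᵥ w)
        ≤ (l2norm (A.mulVec xh - b))^2 := by
      rw [hq, norm_add_smul]
      linarith [sq_nonneg (l2norm (A.mulVec (D.mulVec g)))]
    have hdotw : (A.mulVec (D.mulVec g)) ⬝ᵥ w ≤ lam/2 * l1norm g := by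
      rw [adj, adj]
      calc g ⬝ᵥ (Dᵀ.mulVec (Aᵀ.mulVec w)) ≤ ∑ i, |g i| * (lam/2) := by
            apply Finset.sum_le_sum
            intro i _
            calc g i * (Dᵀ.mulVec (Aᵀ.mulVec w)) i
                ≤ |g i * (Dᵀ.mulVec (Aᵀ.mulVec w)) i| := le_abs_self _
            _ = |g i| * |(Dᵀ.mulVec (Aᵀ.mulVec w)) i| := abs_mul _ _
            _ ≤ |g i| * (lam/2) := by
                apply mul_le_mul_of_nonneg_left _ (abs_nonneg _)
                exact le_trans (abs_le_linf _ i) hw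
      _ = lam/2 * l1norm g := by rw [l1norm, ← Finset.sum_mul]; ring
    -- pointwise soft bound summed
    have hsoft : lam * l1norm (Dᵀ.mulVec xh) - p * (lam^2/(2*ρ))
        ≤ lam * l1norm zh + ρ/2 * (l2norm (zh - Dᵀ.mulVec xh))^2 := by
      have hptw : ∀ i : Fin p, lam * |(Dᵀ.mulVec xh) i| - lam^2/(2*ρ)
          ≤ lam * |zh i| + ρ/2 * (zh i - (Dᵀ.mulVec xh) i)^2 := by
        intro i
        have habs : |(Dᵀ.mulVec xh) i| ≤ |zh i| + |zh i - (Dᵀ.mulVec xh) i| := by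
          calc |(Dᵀ.mulVec xh) i| = |zh i - (zh i - (Dᵀ.mulVec xh) i)| := by congr 1; ring
          _ ≤ |zh i| + |zh i - (Dᵀ.mulVec xh) i| := abs_sub _ _
        have hexp : ρ/2 * (|zh i - (Dᵀ.mulVec xh) i| - lam/ρ)^2
            = ρ/2*(zh i - (Dᵀ.mulVec xh) i)^2 - lam*|zh i - (Dᵀ.mulVec xh) i|
              + lam^2/(2*ρ) := by
          rw [sub_sq, sq_abs]
          field_simp
        have h0 : 0 ≤ ρ/2 * (|zh i - (Dᵀ.mulVec xh) i| - lam/ρ)^2 := by positivity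
        have h1 := mul_le_mul_of_nonneg_left habs hlam.le
        linarith [h0, hexp, h1]
      calc lam * l1norm (Dᵀ.mulVec xh) - p * (lam^2/(2*ρ))
          = ∑ i, (lam * |(Dᵀ.mulVec xh) i| - lam^2/(2*ρ)) := by
            rw [Finset.sum_sub_distrib, Finset.sum_const, Finset.card_univ, Fintype.card_fin,
              l1norm, Finset.mul_sum, nsmul_eq_mul]
      _ ≤ ∑ i, (lam * |zh i| + ρ/2 * (zh i - (Dᵀ.mulVec xh) i)^2) :=
            Finset.sum_le_sum (fun i _ => hptw i)
      _ = lam * l1norm zh + ρ/2 * (l2norm (zh - Dᵀ.mulVec xh))^2 := by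
            rw [Finset.sum_add_distrib, l1norm, Finset.mul_sum, l2sq, Finset.mul_sum]
            simp only [Pi.sub_apply]
    have hmul : lam * l1norm (Dᵀ.mulVec xh)
        ≤ lam * (l1norm (Dᵀ.mulVec x) + 1/2 * l1norm g + lam/(2*ρ) * p) := by
      have he : lam * (l1norm (Dᵀ.mulVec x) + 1/2 * l1norm g + lam/(2*ρ) * p)
          = lam * l1norm (Dᵀ.mulVec x) + lam/2 * l1norm g + (p:ℝ) * (lam^2/(2*ρ)) := by
        ring
      linarith [hm, hfid, hdotw, hsoft, he.le, he.ge]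
    have hCONE0 : l1norm (Dᵀ.mulVec xh)
        ≤ l1norm (Dᵀ.mulVec x) + 1/2 * l1norm g + lam/(2*ρ) * p :=
      le_of_mul_le_mul_left hmul hlam
    -- splitting over T and Tᶜ
    have hch : ∀ i, (Dᵀ.mulVec xh) i = (Dᵀ.mulVec x) i + g i := by
      intro i
      rw [hgdef, Matrix.mulVec_sub]
      simp
    have hT1 : ∑ i ∈ T, (|(Dᵀ.mulVec x) i| - |g i|) ≤ ∑ i ∈ T, |(Dᵀ.mulVec xh) i| := by
      apply Finset.sum_le_sum
      intro i _
      have : |(Dᵀ.mulVec x) i| ≤ |(Dᵀ.mulVec xh) i| + |g i| := by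
        calc |(Dᵀ.mulVec x) i| = |(Dᵀ.mulVec xh) i - g i| := by rw [hch i]; congr 1; ring
        _ ≤ |(Dᵀ.mulVec xh) i| + |g i| := abs_sub _ _
      linarith
    have hT2 : ∑ i ∈ Tᶜ, (|g i| - |(Dᵀ.mulVec x) i|) ≤ ∑ i ∈ Tᶜ, |(Dᵀ.mulVec xh) i| := by
      apply Finset.sum_le_sum
      intro i _
      have : |g i| ≤ |(Dᵀ.mulVec xh) i| + |(Dᵀ.mulVec x) i| := by
        calc |g i| = |(Dᵀ.mulVec xh) i - (Dᵀ.mulVec x) i| := by rw [hch i]; congr 1; ring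
        _ ≤ |(Dᵀ.mulVec xh) i| + |(Dᵀ.mulVec x) i| := abs_sub _ _
      linarith
    have hs1 := Finset.sum_add_sum_compl T (fun i => |(Dᵀ.mulVec xh) i|)
    have hs2 := Finset.sum_add_sum_compl T (fun i => |(Dᵀ.mulVec x) i|)
    have hs3 := Finset.sum_add_sum_compl T (fun i => |g i|)
    have hXr : X = ∑ i ∈ Tᶜ, |g i| := by rw [hXdef, l1_restr]
    have hYr : l1norm (restr T g) = ∑ i ∈ T, |g i| := l1_restr T g
    have hZr : Zc = ∑ i ∈ Tᶜ, |(Dᵀ.mulVec x) i| := by rw [hZcdef, l1_restr]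
    have hl1g : l1norm g = ∑ i : Fin p, |g i| := rfl
    have hl1c : l1norm (Dᵀ.mulVec x) = ∑ i : Fin p, |(Dᵀ.mulVec x) i| := rfl
    have hl1ch : l1norm (Dᵀ.mulVec xh) = ∑ i : Fin p, |(Dᵀ.mulVec xh) i| := rfl
    have hTsub := Finset.sum_sub_distrib (s := T)
      (f := fun i => |(Dᵀ.mulVec x) i|) (g := fun i => |g i|)
    have hTcsub := Finset.sum_sub_distrib (s := Tᶜ)
      (f := fun i => |g i|) (g := fun i => |(Dᵀ.mulVec x) i|)
    have h2r : lam/ρ * p = 2 * (lam/(2*ρ) * p) := by ring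
    rw [hXr, hYr, hZr]
    rw [hl1ch, hl1g, hl1c] at hCONE0
    rw [hTsub] at hT1
    rw [hTcsub] at hT2
    linarith [hT1, hT2, hCONE0, hs1, hs2, hs3, h2r]
  -- Step D : main RIP estimate
  obtain ⟨T₁, Bs, hT₁sub, hT₁card, hBcard, hsumid, htail⟩ := exists_blocks s hs g Tᶜ
  have hL2 : (1 - σ) * l1norm (restr T g)
      ≤ Real.sqrt 2 * s * (lam * (1/2 + matnorm11 (Dᵀ * D))) + Real.sqrt 2 * σ * X := by
    set t0 : ℝ := lam * (1/2 + matnorm11 (Dᵀ * D)) with ht0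
    have ht0nn : 0 ≤ t0 := mul_nonneg hlam.le hc₀nn
    set a1 : Fin p → ℝ := restr T g with ha1
    set b1 : Fin p → ℝ := restr T₁ g with hb1
    set v : Fin p → ℝ := a1 + b1 with hv
    clear_value t0 a1 b1 v
    have hTdisj : ∀ i ∈ T, i ∉ T₁ := by
      intro i hi hmem
      have h1 := hT₁sub hmem
      rw [Finset.mem_compl] at h1
      exact h1 hi
    have hl0a : l0norm a1 ≤ s := by
      rw [ha1]
      have h1 := l0_restr T g
      rw [hTcard] at h1
      exact h1
    have hl0b : l0norm b1 ≤ s := by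
      rw [hb1]
      exact le_trans (l0_restr T₁ g) hT₁card
    have hl0v : l0norm v ≤ 2 * s := by
      have h1 : l0norm v ≤ l0norm a1 + l0norm b1 := by
        have := l0_combo (1:ℝ) 1 a1 b1
        simpa [hv] using this
      omega
    -- dot product identities
    have hab0 : a1 ⬝ᵥ b1 = 0 := by
      show ∑ i, a1 i * b1 i = 0
      apply Finset.sum_eq_zero
      intro i _
      rw [ha1, hb1]
      by_cases hi : i ∈ T
      · have : i ∉ T₁ := hTdisj i hi
        simp [restr, this]
      · simp [restr, hi]
    have hag : a1 ⬝ᵥ g = a1 ⬝ᵥ a1 := by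
      show ∑ i, a1 i * g i = ∑ i, a1 i * a1 i
      apply Finset.sum_congr rfl
      intro i _
      rw [ha1]
      by_cases hi : i ∈ T <;> simp [restr, hi]
    have hbg : b1 ⬝ᵥ g = b1 ⬝ᵥ b1 := by
      show ∑ i, b1 i * g i = ∑ i, b1 i * b1 i
      apply Finset.sum_congr rfl
      intro i _
      rw [hb1]
      by_cases hi : i ∈ T₁ <;> simp [restr, hi]
    have hVsq : v ⬝ᵥ v = a1 ⬝ᵥ a1 + b1 ⬝ᵥ b1 := by
      rw [hv, dotProduct_add, add_dotProduct, add_dotProduct, dotProduct_comm b1 a1, hab0]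
      ring
    have hvg : v ⬝ᵥ g = v ⬝ᵥ v := by
      rw [hVsq, hv, add_dotProduct, hag, hbg]
    -- decomposition g = v + W
    have hgTc : g = a1 + restr Tᶜ g := by
      funext i
      rw [Pi.add_apply, ha1]
      by_cases hi : i ∈ T
      · have : i ∉ Tᶜ := by simp [hi]
        simp [restr, hi, this]
      · have : i ∈ Tᶜ := by simp [hi]
        simp [restr, hi, this]
    have hgvW : g = v + (Bs.map (fun B => restr B g)).sum := by
      funext i
      have h1 := congrFun hgTc i
      have h2 := congrFun hsumid i
      rw [hv]
      simp only [Pi.add_apply] at h1 h2 ⊢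
      rw [h1, h2]
      ring
    -- main chain
    have hdrip := (hA v hl0v).1
    have hE1 : (A.mulVec (D.mulVec v)) ⬝ᵥ (A.mulVec (D.mulVec g))
        = (A.mulVec (D.mulVec v)) ⬝ᵥ (A.mulVec (D.mulVec v))
          + (Bs.map (fun B => (A.mulVec (D.mulVec v)) ⬝ᵥ
              (A.mulVec (D.mulVec (restr B g))))).sum := by
      have hsplit : D.mulVec g
          = D.mulVec v + D.mulVec ((Bs.map (fun B => restr B g)).sum) := by
        conv_lhs => rw [hgvW]
        exact Matrix.mulVec_add D v _
      have hsplit2 : A.mulVec (D.mulVec g)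
          = A.mulVec (D.mulVec v)
            + A.mulVec (D.mulVec ((Bs.map (fun B => restr B g)).sum)) := by
        rw [hsplit]
        exact Matrix.mulVec_add A _ _
      rw [hsplit2, dotProduct_add]
      congr 1
      rw [list_mulVec_sum D, list_mulVec_sum A, list_dot_sum]
    have hE2 : (Bs.map (fun B => (D.mulVec v) ⬝ᵥ (D.mulVec (restr B g)))).sum
        = v ⬝ᵥ v - (D.mulVec v) ⬝ᵥ (D.mulVec v) := by
      rw [← list_dot_sum, ← list_mulVec_sum D]
      have hW : (Bs.map (fun B => restr B g)).sum = g - v := by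
        funext i
        have h1 := congrFun hgvW i
        simp only [Pi.add_apply, Pi.sub_apply] at h1 ⊢
        linarith
      rw [hW, Matrix.mulVec_sub, dotProduct_sub]
      congr 1
      rw [adj]
      have hthis : Dᵀ.mulVec (D.mulVec g) = g := by
        rw [hDg]; exact hgdef.symm
      rw [hthis]
      exact hvg
    have hE3 : (A.mulVec (D.mulVec v)) ⬝ᵥ (A.mulVec (D.mulVec g)) ≤ l1norm v * t0 := by
      have e1 : (A.mulVec (D.mulVec v)) ⬝ᵥ (A.mulVec (D.mulVec g))
          = v ⬝ᵥ (Dᵀ.mulVec (Aᵀ.mulVec (A.mulVec (xh - x)))) := by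
        rw [adj, adj, hDg]
      rw [e1]
      calc v ⬝ᵥ (Dᵀ.mulVec (Aᵀ.mulVec (A.mulVec (xh - x))))
          ≤ ∑ i, |v i| * t0 := by
            apply Finset.sum_le_sum
            intro i _
            calc v i * (Dᵀ.mulVec (Aᵀ.mulVec (A.mulVec (xh - x)))) i
                ≤ |v i * (Dᵀ.mulVec (Aᵀ.mulVec (A.mulVec (xh - x)))) i| := le_abs_self _
            _ = |v i| * |(Dᵀ.mulVec (Aᵀ.mulVec (A.mulVec (xh - x)))) i| := abs_mul _ _
            _ ≤ |v i| * t0 := mul_le_mul_of_nonneg_left (hKvec i) (abs_nonneg _)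
      _ = l1norm v * t0 := by rw [l1norm, ← Finset.sum_mul]
    -- cross terms
    have hl0neg_a : l0norm (-a1) = l0norm a1 := l0_neg a1
    have hl0neg_b : l0norm (-b1) = l0norm b1 := l0_neg b1
    have hcross : ∀ B ∈ Bs,
        -((A.mulVec (D.mulVec v)) ⬝ᵥ (A.mulVec (D.mulVec (restr B g))))
          ≤ -((D.mulVec v) ⬝ᵥ (D.mulVec (restr B g)))
            + (σ * (l2norm (D.mulVec a1) + l2norm (D.mulVec b1)))
              * l2norm (D.mulVec (restr B g)) := by
      intro B hB
      have hl0B : l0norm (restr B g) ≤ s := le_trans (l0_restr B g) (hBcard B hB)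
      have hp1' := polar hA (-a1) (restr B g) (by rw [hl0neg_a]; omega)
      have hp2' := polar hA (-b1) (restr B g) (by rw [hl0neg_b]; omega)
      rw [Matrix.mulVec_neg, Matrix.mulVec_neg, neg_dotProduct, neg_dotProduct, l2_neg] at hp1' hp2'
      have hDv : D.mulVec v = D.mulVec a1 + D.mulVec b1 := by
        rw [hv, Matrix.mulVec_add]
      have hADv : A.mulVec (D.mulVec v) = A.mulVec (D.mulVec a1) + A.mulVec (D.mulVec b1) := by
        rw [hDv, Matrix.mulVec_add]
      rw [hADv, hDv, add_dotProduct, add_dotProduct]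
      nlinarith [hp1', hp2']
    have hsum_cross : -((Bs.map (fun B => (A.mulVec (D.mulVec v)) ⬝ᵥ
          (A.mulVec (D.mulVec (restr B g))))).sum)
        ≤ -((Bs.map (fun B => (D.mulVec v) ⬝ᵥ (D.mulVec (restr B g)))).sum)
          + (σ * (l2norm (D.mulVec a1) + l2norm (D.mulVec b1)))
            * (Bs.map (fun B => l2norm (D.mulVec (restr B g)))).sum := by
      rw [← list_sum_neg, ← list_sum_neg, ← list_sum_mul_left, ← list_sum_add]
      apply List.sum_le_sum
      intro B hB
      exact hcross B hB
    -- tail bound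
    have hss : (0:ℝ) < Real.sqrt s := Real.sqrt_pos.2 (by
      have : (1:ℝ) ≤ (s:ℝ) := by exact_mod_cast hs
      linarith)
    have hGam : (Bs.map (fun B => l2norm (D.mulVec (restr B g)))).sum ≤ X / Real.sqrt s := by
      calc (Bs.map (fun B => l2norm (D.mulVec (restr B g)))).sum
          ≤ (Bs.map (fun B => l2norm (restr B g))).sum :=
            List.sum_le_sum (fun B _ => contr D htf (restr B g))
      _ ≤ (∑ i ∈ Tᶜ, |g i|) / Real.sqrt s := htail
      _ = X / Real.sqrt s := by rw [hXdef, l1_restr]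
    have hGamnn : 0 ≤ X / Real.sqrt s := div_nonneg hXnn hss.le
    -- l2 norms
    have hcontrv : l2norm (D.mulVec v) ≤ l2norm v := contr D htf v
    have hcontra : l2norm (D.mulVec a1) ≤ l2norm a1 := contr D htf a1
    have hcontrb : l2norm (D.mulVec b1) ≤ l2norm b1 := contr D htf b1
    have hVV : (l2norm v)^2 = (l2norm a1)^2 + (l2norm b1)^2 := by
      rw [← dot_self, ← dot_self, ← dot_self]; exact hVsq
    have hab_le : l2norm a1 + l2norm b1 ≤ Real.sqrt 2 * l2norm v := by
      apply sq_le_imp (mul_nonneg hsqrt2.le (l2nn v))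
      rw [mul_pow, Real.sq_sqrt (by norm_num : (0:ℝ) ≤ 2)]
      nlinarith [sq_nonneg (l2norm a1 - l2norm b1), hVV]
    have hl1a : l1norm a1 ≤ Real.sqrt s * l2norm a1 := by
      have := l1_le_sqrt_card T g
      rw [← ha1, hTcard] at this
      exact this
    have hl1b : l1norm b1 ≤ Real.sqrt s * l2norm b1 := by
      have h1 := l1_le_sqrt_card T₁ g
      rw [← hb1] at h1
      calc l1norm b1 ≤ Real.sqrt T₁.card * l2norm b1 := h1
      _ ≤ Real.sqrt s * l2norm b1 := by
          apply mul_le_mul_of_nonneg_right _ (l2nn _)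
          apply Real.sqrt_le_sqrt
          exact_mod_cast hT₁card
    have hl1v : l1norm v ≤ Real.sqrt 2 * Real.sqrt s * l2norm v := by
      have h1 : l1norm v ≤ l1norm a1 + l1norm b1 := by
        rw [l1norm, l1norm, l1norm, ← Finset.sum_add_distrib]
        apply Finset.sum_le_sum
        intro i _
        rw [hv, Pi.add_apply]
        exact abs_add_le _ _
      calc l1norm v ≤ l1norm a1 + l1norm b1 := h1
      _ ≤ Real.sqrt s * l2norm a1 + Real.sqrt s * l2norm b1 := add_le_add hl1a hl1b
      _ = Real.sqrt s * (l2norm a1 + l2norm b1) := by ring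
      _ ≤ Real.sqrt s * (Real.sqrt 2 * l2norm v) :=
          mul_le_mul_of_nonneg_left hab_le (Real.sqrt_nonneg _)
      _ = Real.sqrt 2 * Real.sqrt s * l2norm v := by ring
    -- assemble quadratic inequality
    have hmain : (l2norm v)^2 ≤ l1norm v * t0 + σ * (l2norm v)^2
        + σ * (Real.sqrt 2 * l2norm v) * (X / Real.sqrt s) := by
      have c1 : (1 - σ) * (l2norm (D.mulVec v))^2
          ≤ (l2norm (A.mulVec (D.mulVec v)))^2 := hdrip
      have c2 : (l2norm (A.mulVec (D.mulVec v)))^2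
          = (A.mulVec (D.mulVec v)) ⬝ᵥ (A.mulVec (D.mulVec v)) := (dot_self _).symm
      have c3 := hE1
      have c4 := hE3
      have c5 := hsum_cross
      have c6 := hE2
      -- (1-σ)‖Dv‖² ≤ ‖ADv‖² = ⟨ADv,ADg⟩ - S_A ≤ l1v t0 - S_D + σ(α+β)Γ
      --            = l1v t0 - (v⬝v - ‖Dv‖²_dot) + σ(α+β)Γ
      have c7 : (D.mulVec v) ⬝ᵥ (D.mulVec v) = (l2norm (D.mulVec v))^2 := dot_self _
      have c8 : v ⬝ᵥ v = (l2norm v)^2 := dot_self _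
      have c9 : σ * (l2norm (D.mulVec v))^2 ≤ σ * (l2norm v)^2 := by
        apply mul_le_mul_of_nonneg_left _ hσnn
        exact pow_le_pow_left₀ (l2nn _) hcontrv 2
      have c10 : (σ * (l2norm (D.mulVec a1) + l2norm (D.mulVec b1)))
            * ((Bs.map (fun B => l2norm (D.mulVec (restr B g)))).sum)
          ≤ (σ * (Real.sqrt 2 * l2norm v)) * (X / Real.sqrt s) := by
        have d1 : l2norm (D.mulVec a1) + l2norm (D.mulVec b1)
            ≤ Real.sqrt 2 * l2norm v := le_trans (add_le_add hcontra hcontrb) hab_le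
        have d2 : 0 ≤ l2norm (D.mulVec a1) + l2norm (D.mulVec b1) :=
          add_nonneg (l2nn _) (l2nn _)
        apply mul_le_mul
        · exact mul_le_mul_of_nonneg_left d1 hσnn
        · exact hGam
        · apply List.sum_nonneg
          intro r hr
          obtain ⟨B, _, rfl⟩ := List.mem_map.1 hr
          exact l2nn _
        · exact mul_nonneg hσnn (mul_nonneg hsqrt2.le (l2nn v))
      linarith [c1, c2, c3, c4, c5, c6, c7, c8, c9, c10]
    -- conclude L2
    have hYa : l1norm (restr T g) ≤ Real.sqrt s * l2norm v := by
      have h1 : (l2norm a1)^2 ≤ (l2norm v)^2 := by nlinarith [hVV, sq_nonneg (l2norm b1)]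
      have h2 : l2norm a1 ≤ l2norm v := sq_le_imp (l2nn _) h1
      calc l1norm (restr T g) = l1norm a1 := by rw [ha1]
      _ ≤ Real.sqrt s * l2norm a1 := hl1a
      _ ≤ Real.sqrt s * l2norm v := mul_le_mul_of_nonneg_left h2 (Real.sqrt_nonneg _)
    rw [ha1]
    rcases eq_or_lt_of_le (l2nn v) with hV0 | hVpos
    · have hY0 : l1norm (restr T g) ≤ 0 := by
        rw [← hV0, mul_zero] at hYa
        exact hYa
      have hrhs : 0 ≤ Real.sqrt 2 * s * t0 + Real.sqrt 2 * σ * X := by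
        apply add_nonneg
        · apply mul_nonneg (mul_nonneg hsqrt2.le (Nat.cast_nonneg s)) ht0nn
        · exact mul_nonneg (mul_nonneg hsqrt2.le hσnn) hXnn
      have hY00 : l1norm (restr T g) = 0 := le_antisymm hY0 (l1nn _)
      rw [hY00, mul_zero]
      exact hrhs
    · have hdiv : (1 - σ) * l2norm v
          ≤ t0 * (Real.sqrt 2 * Real.sqrt s) + σ * Real.sqrt 2 * (X / Real.sqrt s) := by
      -- from hmain : (1-σ) V² ≤ l1v t0 + σ√2 V X/√s ≤ (√2√s V) t0 + σ√2 V X/√s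
        have h1 : (1 - σ) * (l2norm v) * (l2norm v)
            ≤ (t0 * (Real.sqrt 2 * Real.sqrt s) + σ * Real.sqrt 2 * (X / Real.sqrt s))
              * (l2norm v) := by
          have h2 : l1norm v * t0 ≤ Real.sqrt 2 * Real.sqrt s * l2norm v * t0 :=
            mul_le_mul_of_nonneg_right hl1v ht0nn
          linarith [hmain, h2]
        exact le_of_mul_le_mul_right h1 hVpos
      have hfinal : (1 - σ) * l1norm (restr T g)
          ≤ Real.sqrt s * ((1 - σ) * l2norm v) := by
        have h3 : (0:ℝ) ≤ 1 - σ := by linarith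
        calc (1 - σ) * l1norm (restr T g) ≤ (1 - σ) * (Real.sqrt s * l2norm v) :=
              mul_le_mul_of_nonneg_left hYa h3
        _ = Real.sqrt s * ((1 - σ) * l2norm v) := by ring
      have hsqs : Real.sqrt s * Real.sqrt s = (s:ℝ) :=
        Real.mul_self_sqrt (Nat.cast_nonneg s)
      have hXds : Real.sqrt s * (X / Real.sqrt s) = X := by
        rw [mul_comm, div_mul_cancel₀ X (ne_of_gt hss)]
      calc (1 - σ) * l1norm (restr T g)
          ≤ Real.sqrt s * ((1 - σ) * l2norm v) := hfinal
      _ ≤ Real.sqrt s * (t0 * (Real.sqrt 2 * Real.sqrt s)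
            + σ * Real.sqrt 2 * (X / Real.sqrt s)) :=
          mul_le_mul_of_nonneg_left hdiv (Real.sqrt_nonneg _)
      _ = t0 * Real.sqrt 2 * (Real.sqrt s * Real.sqrt s)
            + σ * Real.sqrt 2 * (Real.sqrt s * (X / Real.sqrt s)) := by ring
      _ = Real.sqrt 2 * s * t0 + Real.sqrt 2 * σ * X := by
          rw [hsqs, hXds]; ring
  -- Step E : combine cone and L2
  have hfin : (1 - (1 + 3*Real.sqrt 2)*σ) * X
      ≤ (1-σ)*(lam/ρ)*p + 3*Real.sqrt 2*lam*s*(1/2 + matnorm11 (Dᵀ * D))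
        + 4*(1-σ)*Zc := by
    have h3 : (0:ℝ) ≤ 1 - σ := by linarith
    have m1 := mul_le_mul_of_nonneg_left hcone h3
    nlinarith [m1, hL2]
  have hgoal : X ≤ ((1-σ)*(lam/ρ)*p + (3*Real.sqrt 2*lam*s*(1/2 + matnorm11 (Dᵀ * D))
      + 4*(1-σ)*Zc)) / (1 - (1 + 3*Real.sqrt 2)*σ) := by
    rw [le_div_iff₀ hK]
    nlinarith [hfin]
  calc X ≤ _ := hgoal
  _ = (1 - σ) / (1 - (1 + 3 * Real.sqrt 2) * σ) * (lam / ρ) * p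
        + (3 * Real.sqrt 2 * lam * s * (1 / 2 + matnorm11 (D.transpose * D))
            + 4 * (1 - σ) * Zc)
          / (1 - (1 + 3 * Real.sqrt 2) * σ) := by
    ring
end

section
/- (Recovery bound for ALASSO.) Let A ∈ ℝ^{m×n}, let D ∈ ℝ^{n×p} be a tight frame (DDᵀ = Iₙ), and let A satisfy the D-RIP adapted to D with constant σ_{2s} < 1/(1+3√2) (≈ 0.1907). Let λ > 0, x ∈ ℝⁿ, and b = Ax + w with noise w satisfying ‖DᵀAᵀw‖_∞ ≤ λ/2. Let x̂ be a minimizer of the ALASSO problem min_{x∈ℝⁿ} (1/2)‖Ax − b‖₂² + λ‖Dᵀx‖₁. Then, with c₀ = 1/2 + ‖DᵀD‖_{1,1}, C₀ = 4√2·c₀ / (1−(1+3√2)σ_{2s}), and C₁ = 4((√2−1)σ_{2s}+1) / (1−(1+3√2)σ_{2s}), the reconstruction error satisfies ‖x̂ − x‖₂ ≤ C₀·√s·λ + C₁·‖Dᵀx − (Dᵀx)_s‖₁/√s. -/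
open scoped BigOperators

namespace Alasso

variable {k : ℕ}

lemma sumsq_nonneg (v : Fin k → ℝ) : 0 ≤ ∑ i, v i ^ 2 :=
  Finset.sum_nonneg fun _ _ => sq_nonneg _

lemma l2norm_nonneg (v : Fin k → ℝ) : 0 ≤ l2norm v := Real.sqrt_nonneg _

lemma l2norm_sq (v : Fin k → ℝ) : (l2norm v) ^ 2 = ∑ i, v i ^ 2 :=
  Real.sq_sqrt (sumsq_nonneg v)

lemma l2norm_eq_zero {v : Fin k → ℝ} (h : l2norm v = 0) : v = 0 := by
  have h2 : ∑ i, v i ^ 2 = 0 := by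
    have := l2norm_sq v; rw [h] at this; linarith
  funext i
  have := (Finset.sum_eq_zero_iff_of_nonneg (fun i _ => sq_nonneg (v i))).1 h2 i (Finset.mem_univ i)
  have : v i = 0 := by nlinarith
  simpa using this

lemma l2norm_zero : l2norm (0 : Fin k → ℝ) = 0 := by
  simp [l2norm]

lemma l2norm_smul (c : ℝ) (v : Fin k → ℝ) : l2norm (c • v) = |c| * l2norm v := by
  unfold l2norm
  have : ∑ i, (c • v) i ^ 2 = c ^ 2 * ∑ i, v i ^ 2 := by
    rw [Finset.mul_sum]; exact Finset.sum_congr rfl fun i _ => by simp [smul_eq_mul]; ring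
  rw [this, Real.sqrt_mul (sq_nonneg c), Real.sqrt_sq_eq_abs]

lemma abs_dot_le (a b : Fin k → ℝ) : |∑ i, a i * b i| ≤ l2norm a * l2norm b := by
  have hcs := Finset.sum_mul_sq_le_sq_mul_sq Finset.univ a b
  have ha := l2norm_sq a
  have hb := l2norm_sq b
  have h0a := l2norm_nonneg a
  have h0b := l2norm_nonneg b
  rw [abs_le]
  constructor <;> nlinarith [sq_nonneg (∑ i, a i * b i - l2norm a * l2norm b),
    sq_nonneg (∑ i, a i * b i + l2norm a * l2norm b), mul_nonneg h0a h0b]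

lemma dot_le (a b : Fin k → ℝ) : ∑ i, a i * b i ≤ l2norm a * l2norm b :=
  le_trans (le_abs_self _) (abs_dot_le a b)

lemma sq_add_expand (a b : Fin k → ℝ) :
    ∑ i, (a i + b i) ^ 2 = (∑ i, a i ^ 2) + 2 * (∑ i, a i * b i) + ∑ i, b i ^ 2 := by
  rw [Finset.mul_sum, ← Finset.sum_add_distrib, ← Finset.sum_add_distrib]
  exact Finset.sum_congr rfl fun i _ => by ring

lemma l2norm_add_le (a b : Fin k → ℝ) : l2norm (a + b) ≤ l2norm a + l2norm b := by
  have h1 : ∑ i, (a + b) i ^ 2 ≤ (l2norm a + l2norm b) ^ 2 := by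
    have := dot_le a b
    have ha := l2norm_sq a
    have hb := l2norm_sq b
    have : ∑ i, (a i + b i) ^ 2 ≤ (l2norm a + l2norm b) ^ 2 := by
      rw [sq_add_expand]; nlinarith
    simpa using this
  calc l2norm (a + b) = Real.sqrt (∑ i, (a + b) i ^ 2) := rfl
    _ ≤ Real.sqrt ((l2norm a + l2norm b) ^ 2) := Real.sqrt_le_sqrt h1
    _ = |l2norm a + l2norm b| := Real.sqrt_sq_eq_abs _
    _ = l2norm a + l2norm b := abs_of_nonneg (add_nonneg (l2norm_nonneg a) (l2norm_nonneg b))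

lemma l1norm_nonneg (v : Fin k → ℝ) : 0 ≤ l1norm v :=
  Finset.sum_nonneg fun _ _ => abs_nonneg _

lemma l1norm_eq_zero {v : Fin k → ℝ} (h : l1norm v = 0) : v = 0 := by
  funext i
  have := (Finset.sum_eq_zero_iff_of_nonneg (fun i _ => abs_nonneg (v i))).1 h i (Finset.mem_univ i)
  simpa [abs_eq_zero] using this

lemma l1_restr (S : Finset (Fin k)) (v : Fin k → ℝ) :
    l1norm (restr S v) = ∑ i ∈ S, |v i| := by
  unfold l1norm restr
  rw [← Finset.sum_filter_add_sum_filter_not Finset.univ (fun i => i ∈ S)]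
  have h1 : ∀ i ∈ Finset.univ.filter (fun i => i ∈ S), |if i ∈ S then v i else 0| = |v i| := by
    intro i hi; simp at hi; simp [hi]
  have h2 : ∀ i ∈ Finset.univ.filter (fun i => ¬ i ∈ S), |if i ∈ S then v i else 0| = 0 := by
    intro i hi; simp at hi; simp [hi]
  rw [Finset.sum_congr rfl h1, Finset.sum_congr rfl h2]
  simp [Finset.filter_mem_eq_inter]

lemma l2_restr_sq (S : Finset (Fin k)) (v : Fin k → ℝ) :
    (l2norm (restr S v)) ^ 2 = ∑ i ∈ S, v i ^ 2 := by
  rw [l2norm_sq]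
  unfold restr
  rw [← Finset.sum_filter_add_sum_filter_not Finset.univ (fun i => i ∈ S)]
  have h1 : ∀ i ∈ Finset.univ.filter (fun i => i ∈ S), (if i ∈ S then v i else 0) ^ 2 = v i ^ 2 := by
    intro i hi; simp at hi; simp [hi]
  have h2 : ∀ i ∈ Finset.univ.filter (fun i => ¬ i ∈ S), (if i ∈ S then v i else 0) ^ 2 = 0 := by
    intro i hi; simp at hi; simp [hi]
  rw [Finset.sum_congr rfl h1, Finset.sum_congr rfl h2]
  simp [Finset.filter_mem_eq_inter]

lemma l2_restr_eq (S : Finset (Fin k)) (v : Fin k → ℝ) :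
    l2norm (restr S v) = Real.sqrt (∑ i ∈ S, v i ^ 2) := by
  rw [← l2_restr_sq S v, Real.sqrt_sq (l2norm_nonneg _)]

lemma l1_restr_le_sqrt_card (S : Finset (Fin k)) (v : Fin k → ℝ) :
    l1norm (restr S v) ≤ Real.sqrt (S.card) * l2norm (restr S v) := by
  rw [l1_restr]
  have hcs : (∑ i ∈ S, |v i| * 1) ^ 2 ≤ (∑ i ∈ S, |v i| ^ 2) * ∑ i ∈ S, (1:ℝ) ^ 2 :=
    Finset.sum_mul_sq_le_sq_mul_sq S _ _
  simp only [mul_one, one_pow, Finset.sum_const, nsmul_eq_mul] at hcs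
  have habs : ∑ i ∈ S, |v i| ^ 2 = ∑ i ∈ S, v i ^ 2 :=
    Finset.sum_congr rfl fun i _ => sq_abs _
  rw [habs] at hcs
  have h1 : (0:ℝ) ≤ ∑ i ∈ S, |v i| := Finset.sum_nonneg fun _ _ => abs_nonneg _
  calc ∑ i ∈ S, |v i| = Real.sqrt ((∑ i ∈ S, |v i|) ^ 2) := (Real.sqrt_sq h1).symm
    _ ≤ Real.sqrt ((S.card : ℝ) * ∑ i ∈ S, v i ^ 2) := Real.sqrt_le_sqrt (by linarith [hcs])
    _ = Real.sqrt (S.card) * Real.sqrt (∑ i ∈ S, v i ^ 2) := Real.sqrt_mul (by positivity) _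
    _ = Real.sqrt (S.card) * l2norm (restr S v) := by rw [l2_restr_eq]

lemma l0_restr_le (S : Finset (Fin k)) (v : Fin k → ℝ) : l0norm (restr S v) ≤ S.card := by
  unfold l0norm
  apply Finset.card_le_card
  intro i hi
  simp only [Finset.mem_filter, Finset.mem_univ, true_and, restr] at hi
  by_contra h
  simp [h] at hi

lemma restr_union_disj {S₁ S₂ : Finset (Fin k)} (h : Disjoint S₁ S₂) (v : Fin k → ℝ) :
    restr (S₁ ∪ S₂) v = restr S₁ v + restr S₂ v := by
  funext i
  simp only [restr, Pi.add_apply, Finset.mem_union]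
  by_cases h1 : i ∈ S₁
  · have h2 : i ∉ S₂ := Finset.disjoint_left.1 h h1
    simp [h1, h2]
  · by_cases h2 : i ∈ S₂ <;> simp [h1, h2]

lemma restr_empty (v : Fin k → ℝ) : restr (∅ : Finset (Fin k)) v = 0 := by
  funext i; simp [restr]

lemma abs_le_linfnorm (v : Fin k → ℝ) (i : Fin k) : |v i| ≤ linfnorm v :=
  le_ciSup (f := fun i => |v i|) (Set.Finite.bddAbove (Set.finite_range _)) i

lemma matnorm11_nonneg {a b : ℕ} (M : Matrix (Fin a) (Fin b) ℝ) : 0 ≤ matnorm11 M :=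
  Real.iSup_nonneg fun x => div_nonneg (l1norm_nonneg _) (l1norm_nonneg _)

lemma l1_mulVec_le {a b : ℕ} (M : Matrix (Fin a) (Fin b) ℝ) (x : Fin b → ℝ) :
    l1norm (M.mulVec x) ≤ (∑ i, ∑ j, |M i j|) * l1norm x := by
  unfold l1norm
  set C := ∑ i, ∑ j, |M i j| with hC
  have hcol : ∀ j₀ : Fin b, ∑ i, |M i j₀| ≤ C := by
    intro j₀
    apply Finset.sum_le_sum
    intro i _
    exact Finset.single_le_sum (f := fun j => |M i j|) (fun j _ => abs_nonneg _) (Finset.mem_univ j₀)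
  calc ∑ i, |M.mulVec x i| ≤ ∑ i, ∑ j, |M i j| * |x j| := by
        apply Finset.sum_le_sum
        intro i _
        calc |M.mulVec x i| = |∑ j, M i j * x j| := rfl
          _ ≤ ∑ j, |M i j * x j| := Finset.abs_sum_le_sum_abs _ _
          _ = ∑ j, |M i j| * |x j| := Finset.sum_congr rfl fun j _ => abs_mul _ _
    _ = ∑ j, (∑ i, |M i j|) * |x j| := by
        rw [Finset.sum_comm]
        exact Finset.sum_congr rfl fun j _ => (Finset.sum_mul _ _ _).symm
    _ ≤ ∑ j, C * |x j| := Finset.sum_le_sum fun j _ =>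
        mul_le_mul_of_nonneg_right (hcol j) (abs_nonneg _)
    _ = C * ∑ j, |x j| := (Finset.mul_sum _ _ _).symm

lemma l1_mulVec_le_matnorm {a b : ℕ} (M : Matrix (Fin a) (Fin b) ℝ) (x : Fin b → ℝ)
    (hx : x ≠ 0) : l1norm (M.mulVec x) ≤ matnorm11 M * l1norm x := by
  have hxpos : 0 < l1norm x := by
    rcases (l1norm_nonneg x).lt_or_eq with h | h
    · exact h
    · exact absurd (l1norm_eq_zero h.symm) hx
  have hb : BddAbove (Set.range fun y : {y : Fin b → ℝ // y ≠ 0} =>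
      l1norm (M.mulVec y.1) / l1norm y.1) := by
    refine ⟨∑ i, ∑ j, |M i j|, ?_⟩
    rintro r ⟨y, rfl⟩
    have hypos : 0 < l1norm y.1 := by
      rcases (l1norm_nonneg y.1).lt_or_eq with h | h
      · exact h
      · exact absurd (l1norm_eq_zero h.symm) y.2
    rw [div_le_iff₀ hypos]
    exact l1_mulVec_le M y.1
  have := le_ciSup hb ⟨x, hx⟩
  rw [div_le_iff₀ hxpos] at this
  exact this

end Alasso

namespace Alasso

variable {α : Type*}

def chunks (s : ℕ) : List α → List (List α)
  | [] => []
  | a :: t => (a :: t.take (s-1)) :: chunks s (t.drop (s-1))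
termination_by l => l.length
decreasing_by simp [List.length_drop]

@[simp] lemma chunks_nil (s : ℕ) : chunks s ([] : List α) = [] := by
  simp [chunks]

lemma chunks_cons (s : ℕ) (a : α) (t : List α) :
    chunks s (a :: t) = (a :: t.take (s-1)) :: chunks s (t.drop (s-1)) := by
  simp [chunks]

lemma chunks_join (s : ℕ) : ∀ l : List α, (chunks s l).flatten = l
  | [] => by simp
  | a :: t => by
      rw [chunks_cons]
      show (a :: t.take (s-1)) ++ (chunks s (t.drop (s-1))).flatten = a :: t
      rw [chunks_join s (t.drop (s-1))]
      simp [List.take_append_drop]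
termination_by l => l.length
decreasing_by simp [List.length_drop]

lemma chunks_length_le {s : ℕ} (hs : 1 ≤ s) :
    ∀ l : List α, ∀ c ∈ chunks s l, c.length ≤ s
  | [] => by simp
  | a :: t => by
      intro c hc
      rw [chunks_cons] at hc
      rcases List.mem_cons.1 hc with h | h
      · subst h
        simp only [List.length_cons, List.length_take]
        omega
      · exact chunks_length_le hs (t.drop (s-1)) c h
termination_by l => l.length
decreasing_by simp [List.length_drop]

/-- The shifting inequality: for a list sorted by decreasing `|u|` whose entries are
bounded by `m`, the sum of block ℓ₂ norms is at most `√s m + ℓ₁/√s`. -/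
lemma shift {p : ℕ} (u : Fin p → ℝ) {s : ℕ} (hs : 1 ≤ s) :
    ∀ l : List (Fin p), List.Pairwise (fun i j => |u j| ≤ |u i|) l →
      ∀ m : ℝ, 0 ≤ m → (∀ i ∈ l, |u i| ≤ m) →
      ((chunks s l).map (fun c => Real.sqrt (∑ i ∈ c.toFinset, u i ^ 2))).sum
        ≤ Real.sqrt s * m + (l.map (fun i => |u i|)).sum / Real.sqrt s
  | [] => by
      intro _ m hm _
      simp only [chunks_nil, List.map_nil, List.sum_nil]
      have h1 : (0:ℝ) ≤ Real.sqrt s * m := mul_nonneg (Real.sqrt_nonneg _) hm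
      simp
      positivity
  | a :: t => by
      intro hsort m hm hbd
      have hs0 : (0:ℝ) < Real.sqrt s := Real.sqrt_pos.2 (by exact_mod_cast hs)
      set c₀ : List (Fin p) := a :: t.take (s-1) with hc₀
      set r : List (Fin p) := t.drop (s-1) with hr
      have happ : c₀ ++ r = a :: t := by
        simp [hc₀, hr, List.take_append_drop]
      -- bound on the first block
      have hfir : Real.sqrt (∑ i ∈ c₀.toFinset, u i ^ 2) ≤ Real.sqrt s * m := by
        have hsub : ∑ i ∈ c₀.toFinset, u i ^ 2 ≤ (c₀.toFinset.card : ℝ) * m ^ 2 := by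
          calc ∑ i ∈ c₀.toFinset, u i ^ 2 ≤ ∑ _i ∈ c₀.toFinset, m ^ 2 := by
                apply Finset.sum_le_sum
                intro i hi
                have hi' : i ∈ (a :: t) := by
                  rw [← happ]; exact List.mem_append_left _ (List.mem_toFinset.1 hi)
                have := hbd i hi'
                nlinarith [abs_nonneg (u i), sq_abs (u i)]
            _ = (c₀.toFinset.card : ℝ) * m ^ 2 := by
                rw [Finset.sum_const, nsmul_eq_mul]
        have hcard : (c₀.toFinset.card : ℝ) ≤ s := by
          have h1 : c₀.toFinset.card ≤ c₀.length := List.toFinset_card_le _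
          have h2 : c₀.length ≤ s := by
            simp only [hc₀, List.length_cons, List.length_take]; omega
          exact_mod_cast le_trans h1 h2
        calc Real.sqrt (∑ i ∈ c₀.toFinset, u i ^ 2)
            ≤ Real.sqrt ((s : ℝ) * m ^ 2) := by
              apply Real.sqrt_le_sqrt
              calc ∑ i ∈ c₀.toFinset, u i ^ 2 ≤ (c₀.toFinset.card : ℝ) * m ^ 2 := hsub
                _ ≤ (s:ℝ) * m ^ 2 := by nlinarith [sq_nonneg m]
          _ = Real.sqrt s * m := by
              rw [Real.sqrt_mul (by positivity), Real.sqrt_sq hm]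
      rw [chunks_cons, List.map_cons, List.sum_cons]
      by_cases hre : r = []
      · rw [← hc₀, ← hr, hre]
        simp only [chunks_nil, List.map_nil, List.sum_nil, add_zero]
        have h2 : (0:ℝ) ≤ ((a :: t).map (fun i => |u i|)).sum / Real.sqrt s := by
          apply div_nonneg _ (le_of_lt hs0)
          apply List.sum_nonneg
          intro y hy
          rcases List.mem_map.1 hy with ⟨i, _, rfl⟩
          exact abs_nonneg _
        linarith
      · -- r nonempty : the first block is full
        have hlen : c₀.length = s := by
          have : s - 1 ≤ t.length := by
            by_contra hcon
            push_neg at hcon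
            exact hre (List.drop_eq_nil_of_le (by omega))
          simp only [hc₀, List.length_cons, List.length_take]
          omega
        -- pairwise structure across the blocks
        have hsort' : List.Pairwise (fun i j => |u j| ≤ |u i|) (c₀ ++ r) := by
          rw [happ]; exact hsort
        rw [List.pairwise_append] at hsort'
        obtain ⟨hp₀, hpr, hcross⟩ := hsort'
        set S1 : ℝ := (c₀.map (fun i => |u i|)).sum with hS1
        have hS1nn : 0 ≤ S1 := by
          apply List.sum_nonneg
          intro y hy
          rcases List.mem_map.1 hy with ⟨i, _, rfl⟩
          exact abs_nonneg _
        set m' : ℝ := S1 / s with hm'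
        have hm'0 : 0 ≤ m' := div_nonneg hS1nn (by positivity)
        have hbd' : ∀ j ∈ r, |u j| ≤ m' := by
          intro j hj
          have hterm : ∀ i ∈ c₀, |u j| ≤ |u i| := fun i hi => hcross i hi j hj
          have hsum : (s : ℝ) * |u j| ≤ S1 := by
            have : (c₀.map (fun _ => |u j|)).sum ≤ S1 := by
              apply List.sum_le_sum
              intro i hi
              exact hterm i hi
            rw [List.map_const', List.sum_replicate, hlen] at this
            rw [nsmul_eq_mul] at this
            exact_mod_cast this
          rw [hm', le_div_iff₀ (by positivity : (0:ℝ) < (s:ℝ))]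
          linarith
        have IH := shift u hs r hpr m' hm'0 hbd'
        have hsplit : ((a :: t).map (fun i => |u i|)).sum
            = S1 + (r.map (fun i => |u i|)).sum := by
          rw [← happ, List.map_append, List.sum_append]
        have hkey : Real.sqrt s * m' = S1 / Real.sqrt s := by
          rw [hm']
          rw [eq_div_iff (ne_of_gt hs0)]
          have : Real.sqrt s * Real.sqrt s = (s:ℝ) := Real.mul_self_sqrt (by positivity)
          field_simp
          nlinarith [this]
        rw [hsplit]
        have : ((chunks s r).map (fun c => Real.sqrt (∑ i ∈ c.toFinset, u i ^ 2))).sum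
            ≤ S1 / Real.sqrt s + (r.map (fun i => |u i|)).sum / Real.sqrt s := by
          rw [← hkey]; exact IH
        have hgoal : Real.sqrt (∑ i ∈ c₀.toFinset, u i ^ 2)
            + ((chunks s r).map (fun c => Real.sqrt (∑ i ∈ c.toFinset, u i ^ 2))).sum
            ≤ Real.sqrt s * m + (S1 + (r.map (fun i => |u i|)).sum) / Real.sqrt s := by
          rw [add_div]
          linarith
        exact hgoal
termination_by l => l.length
decreasing_by simp [List.length_drop]

end Alasso

namespace Alasso

variable {p q : ℕ}

lemma restr_join (u : Fin p → ℝ) :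
    ∀ L : List (List (Fin p)), L.flatten.Nodup →
      (L.map (fun c => restr c.toFinset u)).sum = restr L.flatten.toFinset u
  | [] => by
      intro _
      simp [restr_empty]
  | c :: L => by
      intro hnd
      have hnd' : (c ++ L.flatten).Nodup := hnd
      rw [List.nodup_append] at hnd'
      obtain ⟨hc, hL, hdisj⟩ := hnd'
      have hdisjF : Disjoint c.toFinset L.flatten.toFinset := by
        rw [Finset.disjoint_left]
        intro i hi hij
        exact hdisj _ (List.mem_toFinset.1 hi) _ (List.mem_toFinset.1 hij) rfl
      rw [List.map_cons, List.sum_cons, restr_join u L hL]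
      show restr c.toFinset u + restr L.flatten.toFinset u = restr (c ++ L.flatten).toFinset u
      rw [List.toFinset_append, restr_union_disj hdisjF]

lemma mulVec_listsum {β : Type*} (M : Matrix (Fin q) (Fin p) ℝ) (L : List β)
    (f : β → (Fin p → ℝ)) :
    M.mulVec (L.map f).sum = (L.map (fun c => M.mulVec (f c))).sum := by
  induction L with
  | nil => simp [Matrix.mulVec_zero]
  | cons c L ih => simp [Matrix.mulVec_add, ih]

lemma dot_listsum {β : Type*} (a : Fin p → ℝ) (L : List β) (f : β → (Fin p → ℝ)) :
    ∑ i, a i * (L.map f).sum i = (L.map (fun c => ∑ i, a i * f c i)).sum := by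
  induction L with
  | nil => simp
  | cons c L ih =>
      simp only [List.map_cons, List.sum_cons, Pi.add_apply]
      rw [← ih, ← Finset.sum_add_distrib]
      exact Finset.sum_congr rfl fun i _ => by ring

lemma l2_listsum_le {β : Type*} (L : List β) (f : β → (Fin p → ℝ)) :
    l2norm (L.map f).sum ≤ (L.map (fun c => l2norm (f c))).sum := by
  induction L with
  | nil => simp [l2norm_zero]
  | cons c L ih =>
      simp only [List.map_cons, List.sum_cons]
      calc l2norm (f c + (L.map f).sum) ≤ l2norm (f c) + l2norm (L.map f).sum :=
            l2norm_add_le _ _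
        _ ≤ l2norm (f c) + (L.map (fun c => l2norm (f c))).sum := by linarith

lemma l0_add_le (v w : Fin p → ℝ) : l0norm (v + w) ≤ l0norm v + l0norm w := by
  unfold l0norm
  calc (Finset.univ.filter (fun i => (v + w) i ≠ 0)).card
      ≤ ((Finset.univ.filter (fun i => v i ≠ 0)) ∪ (Finset.univ.filter (fun i => w i ≠ 0))).card := by
        apply Finset.card_le_card
        intro i hi
        simp only [Finset.mem_filter, Finset.mem_univ, true_and, Pi.add_apply] at hi
        simp only [Finset.mem_union, Finset.mem_filter, Finset.mem_univ, true_and]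
        by_contra hcon
        push_neg at hcon
        rw [hcon.1, hcon.2] at hi
        simp at hi
    _ ≤ _ := Finset.card_union_le _ _

lemma l0_smul_le (c : ℝ) (v : Fin p → ℝ) : l0norm (c • v) ≤ l0norm v := by
  unfold l0norm
  apply Finset.card_le_card
  intro i hi
  simp only [Finset.mem_filter, Finset.mem_univ, true_and, Pi.smul_apply, smul_eq_mul] at hi ⊢
  intro h
  rw [h, mul_zero] at hi
  exact hi rfl

lemma l0_neg (v : Fin p → ℝ) : l0norm (-v) = l0norm v := by
  unfold l0norm
  congr 1
  apply Finset.filter_congr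
  intro i _
  simp

lemma l0_sub_le (v w : Fin p → ℝ) : l0norm (v - w) ≤ l0norm v + l0norm w := by
  have : v - w = v + (-w) := by ring
  rw [this]
  calc l0norm (v + (-w)) ≤ l0norm v + l0norm (-w) := l0_add_le _ _
    _ = l0norm v + l0norm w := by rw [l0_neg]

/-- adjoint identity for sums -/
lemma adj_dot (M : Matrix (Fin q) (Fin p) ℝ) (a : Fin p → ℝ) (c : Fin q → ℝ) :
    ∑ i, (M.mulVec a) i * c i = ∑ j, a j * (M.transpose.mulVec c) j := by
  unfold Matrix.mulVec dotProduct
  simp only [Matrix.transpose_apply]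
  have h1 : ∀ i : Fin q, (∑ j, M i j * a j) * c i = ∑ j, M i j * a j * c i := by
    intro i; rw [Finset.sum_mul]
  have h2 : ∀ j : Fin p, a j * (∑ i, M i j * c i) = ∑ i, M i j * a j * c i := by
    intro j; rw [Finset.mul_sum]; exact Finset.sum_congr rfl fun i _ => by ring
  rw [Finset.sum_congr rfl fun i _ => h1 i, Finset.sum_congr rfl fun j _ => h2 j]
  exact Finset.sum_comm

end Alasso

namespace Alasso

variable {m n p : ℕ}

/-- polarization identity for sums -/
lemma dot_polar {k : ℕ} (a b : Fin k → ℝ) :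
    ∑ i, a i * b i = ((∑ i, (a i + b i) ^ 2) - ∑ i, (a i - b i) ^ 2) / 4 := by
  rw [← Finset.sum_sub_distrib]
  rw [Finset.sum_div]
  exact Finset.sum_congr rfl fun i _ => by ring

lemma parallelogram {k : ℕ} (a b : Fin k → ℝ) :
    (∑ i, (a i + b i) ^ 2) + ∑ i, (a i - b i) ^ 2 = 2 * (∑ i, a i ^ 2) + 2 * ∑ i, b i ^ 2 := by
  rw [← Finset.sum_add_distrib, Finset.mul_sum, Finset.mul_sum, ← Finset.sum_add_distrib]
  exact Finset.sum_congr rfl fun i _ => by ring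

/-- unscaled cross-inner-product bound from D-RIP -/
lemma drip_cross_half {s : ℕ} (A : Matrix (Fin m) (Fin n) ℝ) (D : Matrix (Fin n) (Fin p) ℝ)
    (σ : ℝ) (hA : DRIP A D (2*s) σ)
    (w₁ w₂ : Fin p → ℝ) (h12 : l0norm w₁ + l0norm w₂ ≤ 2*s) :
    |(∑ i, (A.mulVec (D.mulVec w₁)) i * (A.mulVec (D.mulVec w₂)) i)
      - ∑ i, (D.mulVec w₁) i * (D.mulVec w₂) i|
    ≤ σ / 2 * ((l2norm (D.mulVec w₁)) ^ 2 + (l2norm (D.mulVec w₂)) ^ 2) := by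
  have hplus := hA (w₁ + w₂) (le_trans (l0_add_le w₁ w₂) h12)
  have hminus := hA (w₁ - w₂) (le_trans (l0_sub_le w₁ w₂) h12)
  have hDp : D.mulVec (w₁ + w₂) = D.mulVec w₁ + D.mulVec w₂ := Matrix.mulVec_add _ _ _
  have hDm : D.mulVec (w₁ - w₂) = D.mulVec w₁ - D.mulVec w₂ := Matrix.mulVec_sub _ _ _
  have hAp : A.mulVec (D.mulVec (w₁ + w₂)) = A.mulVec (D.mulVec w₁) + A.mulVec (D.mulVec w₂) := by
    rw [hDp]; exact Matrix.mulVec_add _ _ _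
  have hAm : A.mulVec (D.mulVec (w₁ - w₂)) = A.mulVec (D.mulVec w₁) - A.mulVec (D.mulVec w₂) := by
    rw [hDm]; exact Matrix.mulVec_sub _ _ _
  set a := D.mulVec w₁
  set b := D.mulVec w₂
  set a' := A.mulVec (D.mulVec w₁)
  set b' := A.mulVec (D.mulVec w₂)
  have e1 : (l2norm (D.mulVec (w₁ + w₂))) ^ 2 = ∑ i, (a i + b i) ^ 2 := by
    rw [l2norm_sq, hDp]; exact Finset.sum_congr rfl fun i _ => by simp
  have e2 : (l2norm (D.mulVec (w₁ - w₂))) ^ 2 = ∑ i, (a i - b i) ^ 2 := by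
    rw [l2norm_sq, hDm]; exact Finset.sum_congr rfl fun i _ => by simp
  have e3 : (l2norm (A.mulVec (D.mulVec (w₁ + w₂)))) ^ 2 = ∑ i, (a' i + b' i) ^ 2 := by
    rw [l2norm_sq, hAp]; exact Finset.sum_congr rfl fun i _ => by simp
  have e4 : (l2norm (A.mulVec (D.mulVec (w₁ - w₂)))) ^ 2 = ∑ i, (a' i - b' i) ^ 2 := by
    rw [l2norm_sq, hAm]; exact Finset.sum_congr rfl fun i _ => by simp
  rw [e1, e3] at hplus
  rw [e2, e4] at hminus
  have hpar := parallelogram a b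
  have ha2 := l2norm_sq a
  have hb2 := l2norm_sq b
  set Qp := ∑ i, (a i + b i) ^ 2 with hQp
  set Qm := ∑ i, (a i - b i) ^ 2 with hQm
  set Pp := ∑ i, (a' i + b' i) ^ 2 with hPp
  set Pm := ∑ i, (a' i - b' i) ^ 2 with hPm
  have q1 : σ * Qp + σ * Qm = 2 * (σ * (∑ i, a i ^ 2)) + 2 * (σ * (∑ i, b i ^ 2)) := by
    rw [← mul_add, hpar]; ring
  have k1 : Pp - Qp ≤ σ * Qp := by nlinarith [hplus.2]
  have k2 : -(σ * Qp) ≤ Pp - Qp := by nlinarith [hplus.1]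
  have k3 : Pm - Qm ≤ σ * Qm := by nlinarith [hminus.2]
  have k4 : -(σ * Qm) ≤ Pm - Qm := by nlinarith [hminus.1]
  rw [dot_polar a' b', dot_polar a b, ha2, hb2]
  rw [abs_le]
  constructor
  · have : σ / 2 * (∑ i, a i ^ 2 + ∑ i, b i ^ 2)
        = (2 * (σ * (∑ i, a i ^ 2)) + 2 * (σ * (∑ i, b i ^ 2))) / 4 := by ring
    rw [this, ← q1, ← hQp, ← hQm, ← hPp, ← hPm]
    linarith
  · have : σ / 2 * (∑ i, a i ^ 2 + ∑ i, b i ^ 2)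
        = (2 * (σ * (∑ i, a i ^ 2)) + 2 * (σ * (∑ i, b i ^ 2))) / 4 := by ring
    rw [this, ← q1, ← hQp, ← hQm, ← hPp, ← hPm]
    linarith

/-- scaled cross-inner-product bound from D-RIP -/
lemma drip_cross {s : ℕ} (A : Matrix (Fin m) (Fin n) ℝ) (D : Matrix (Fin n) (Fin p) ℝ)
    (σ : ℝ) (hA : DRIP A D (2*s) σ) (hσ : 0 ≤ σ)
    (w₁ w₂ : Fin p → ℝ) (h12 : l0norm w₁ + l0norm w₂ ≤ 2*s) :
    |(∑ i, (A.mulVec (D.mulVec w₁)) i * (A.mulVec (D.mulVec w₂)) i)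
      - ∑ i, (D.mulVec w₁) i * (D.mulVec w₂) i|
    ≤ σ * l2norm (D.mulVec w₁) * l2norm (D.mulVec w₂) := by
  set a1 := l2norm (D.mulVec w₁) with ha1
  set a2 := l2norm (D.mulVec w₂) with ha2
  have ha1n : 0 ≤ a1 := l2norm_nonneg _
  have ha2n : 0 ≤ a2 := l2norm_nonneg _
  rcases eq_or_lt_of_le ha1n with h1 | h1
  · -- a1 = 0 : D w₁ = 0, A D w₁ = 0
    have hz : D.mulVec w₁ = 0 := l2norm_eq_zero h1.symm
    have hz' : A.mulVec (D.mulVec w₁) = 0 := by rw [hz]; exact Matrix.mulVec_zero _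
    simp [hz, hz', ← ha1, ← h1]
  rcases eq_or_lt_of_le ha2n with h2 | h2
  · have hz : D.mulVec w₂ = 0 := l2norm_eq_zero h2.symm
    have hz' : A.mulVec (D.mulVec w₂) = 0 := by rw [hz]; exact Matrix.mulVec_zero _
    simp [hz, hz', ← ha2, ← h2]
  -- both positive : apply the half bound to scaled vectors
  have h12' : l0norm (a2 • w₁) + l0norm (a1 • w₂) ≤ 2*s :=
    le_trans (add_le_add (l0_smul_le _ _) (l0_smul_le _ _)) h12
  have hhalf := drip_cross_half A D σ hA (a2 • w₁) (a1 • w₂) h12'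
  have hD1 : D.mulVec (a2 • w₁) = a2 • D.mulVec w₁ := Matrix.mulVec_smul _ _ _
  have hD2 : D.mulVec (a1 • w₂) = a1 • D.mulVec w₂ := Matrix.mulVec_smul _ _ _
  have hA1 : A.mulVec (D.mulVec (a2 • w₁)) = a2 • A.mulVec (D.mulVec w₁) := by
    rw [hD1]; exact Matrix.mulVec_smul _ _ _
  have hA2 : A.mulVec (D.mulVec (a1 • w₂)) = a1 • A.mulVec (D.mulVec w₂) := by
    rw [hD2]; exact Matrix.mulVec_smul _ _ _
  rw [hA1, hA2, hD1, hD2] at hhalf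
  rw [l2norm_smul, l2norm_smul, abs_of_nonneg ha1n, abs_of_nonneg ha2n] at hhalf
  have hsum1 : ∑ i, (a2 • A.mulVec (D.mulVec w₁)) i * (a1 • A.mulVec (D.mulVec w₂)) i
      = a1 * a2 * ∑ i, (A.mulVec (D.mulVec w₁)) i * (A.mulVec (D.mulVec w₂)) i := by
    rw [Finset.mul_sum]; exact Finset.sum_congr rfl fun i _ => by simp [smul_eq_mul]; ring
  have hsum2 : ∑ i, (a2 • D.mulVec w₁) i * (a1 • D.mulVec w₂) i
      = a1 * a2 * ∑ i, (D.mulVec w₁) i * (D.mulVec w₂) i := by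
    rw [Finset.mul_sum]; exact Finset.sum_congr rfl fun i _ => by simp [smul_eq_mul]; ring
  rw [hsum1, hsum2, ← mul_sub, abs_mul, abs_of_nonneg (by positivity : (0:ℝ) ≤ a1 * a2)]
    at hhalf
  have hpos : 0 < a1 * a2 := by positivity
  have heq : σ / 2 * ((a2 * a1) ^ 2 + (a1 * a2) ^ 2) = a1 * a2 * (σ * a1 * a2) := by ring
  rw [heq] at hhalf
  exact (mul_le_mul_iff_right₀ hpos).1 hhalf

end Alasso

namespace Alasso

variable {n p : ℕ}

lemma sq_le_imp {x y : ℝ} (hx : 0 ≤ x) (hy : 0 ≤ y) (h : x ^ 2 ≤ y ^ 2) : x ≤ y := by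
  nlinarith

lemma tf_mul {D : Matrix (Fin n) (Fin p) ℝ} (htf : D * D.transpose = 1) (v : Fin n → ℝ) :
    D.mulVec (D.transpose.mulVec v) = v := by
  rw [Matrix.mulVec_mulVec, htf, Matrix.one_mulVec]

lemma dot_restr (S : Finset (Fin p)) (u : Fin p → ℝ) :
    ∑ i, u i * restr S u i = ∑ i ∈ S, u i ^ 2 := by
  unfold restr
  rw [← Finset.sum_filter_add_sum_filter_not Finset.univ (fun i => i ∈ S)]
  have h1 : ∀ i ∈ Finset.univ.filter (fun i => i ∈ S),
      u i * (if i ∈ S then u i else 0) = u i ^ 2 := by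
    intro i hi; simp at hi; simp [hi]; ring
  have h2 : ∀ i ∈ Finset.univ.filter (fun i => ¬ i ∈ S),
      u i * (if i ∈ S then u i else 0) = 0 := by
    intro i hi; simp at hi; simp [hi]
  rw [Finset.sum_congr rfl h1, Finset.sum_congr rfl h2]
  simp [Finset.filter_mem_eq_inter]

lemma tf_l2_dt {D : Matrix (Fin n) (Fin p) ℝ} (htf : D * D.transpose = 1) (v : Fin n → ℝ) :
    l2norm (D.transpose.mulVec v) = l2norm v := by
  have key : ∑ j, (D.transpose.mulVec v) j ^ 2 = ∑ i, v i ^ 2 := by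
    have h1 := adj_dot D (D.transpose.mulVec v) v
    rw [tf_mul htf] at h1
    have h2 : ∑ i, v i * v i = ∑ i, v i ^ 2 := Finset.sum_congr rfl fun i _ => (sq (v i)).symm ▸ by ring
    have h3 : ∑ j, (D.transpose.mulVec v) j * (D.transpose.mulVec v) j
        = ∑ j, (D.transpose.mulVec v) j ^ 2 := Finset.sum_congr rfl fun j _ => by ring
    rw [h3] at h1
    rw [← h1]
    exact Finset.sum_congr rfl fun i _ => by ring
  unfold l2norm
  rw [key]

lemma tf_l2_D_le {D : Matrix (Fin n) (Fin p) ℝ} (htf : D * D.transpose = 1) (z : Fin p → ℝ) :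
    l2norm (D.mulVec z) ≤ l2norm z := by
  set y := D.mulVec z with hy
  have h1 : ∑ i, y i * y i = ∑ j, z j * (D.transpose.mulVec y) j := adj_dot D z y
  have h2 : ∑ i, y i * y i = (l2norm y) ^ 2 := by
    rw [l2norm_sq]; exact Finset.sum_congr rfl fun i _ => by ring
  have h3 : ∑ j, z j * (D.transpose.mulVec y) j ≤ l2norm z * l2norm (D.transpose.mulVec y) :=
    dot_le _ _
  rw [tf_l2_dt htf] at h3
  have h4 : (l2norm y) ^ 2 ≤ l2norm z * l2norm y := by rw [← h2, h1]; exact h3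
  rcases eq_or_lt_of_le (l2norm_nonneg y) with h5 | h5
  · rw [← h5]; exact l2norm_nonneg z
  · nlinarith

/-- The tail of the chunk decomposition satisfies the shifting bound. -/
lemma shift_tail (u : Fin p → ℝ) {s : ℕ} (hs : 1 ≤ s) (l : List (Fin p))
    (hsort : List.Pairwise (fun i j => |u j| ≤ |u i|) l) :
    (((chunks s l).tail).map (fun c => Real.sqrt (∑ i ∈ c.toFinset, u i ^ 2))).sum
      ≤ (l.map (fun i => |u i|)).sum / Real.sqrt s := by
  have hs0 : (0:ℝ) < Real.sqrt s := Real.sqrt_pos.2 (by exact_mod_cast hs)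
  match l with
  | [] => simp
  | a :: t =>
    rw [chunks_cons, List.tail_cons]
    set c₀ : List (Fin p) := a :: t.take (s-1) with hc₀
    set r : List (Fin p) := t.drop (s-1) with hr
    have happ : c₀ ++ r = a :: t := by simp [hc₀, hr, List.take_append_drop]
    by_cases hre : r = []
    · rw [hre]
      simp only [chunks_nil, List.map_nil, List.sum_nil]
      apply div_nonneg _ (le_of_lt hs0)
      apply List.sum_nonneg
      intro y hy
      rcases List.mem_map.1 hy with ⟨i, _, rfl⟩
      exact abs_nonneg _
    · have hlen : c₀.length = s := by
        have : s - 1 ≤ t.length := by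
          by_contra hcon
          push_neg at hcon
          exact hre (List.drop_eq_nil_of_le (by omega))
        have h2 : s - 1 < t.length := by
          by_contra hcon
          push_neg at hcon
          exact hre (List.drop_eq_nil_of_le hcon)
        simp only [hc₀, List.length_cons, List.length_take]
        omega
      have hsort' : List.Pairwise (fun i j => |u j| ≤ |u i|) (c₀ ++ r) := by
        rw [happ]; exact hsort
      rw [List.pairwise_append] at hsort'
      obtain ⟨hp₀, hpr, hcross⟩ := hsort'
      set S1 : ℝ := (c₀.map (fun i => |u i|)).sum with hS1
      have hS1nn : 0 ≤ S1 := by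
        apply List.sum_nonneg
        intro y hy
        rcases List.mem_map.1 hy with ⟨i, _, rfl⟩
        exact abs_nonneg _
      set m' : ℝ := S1 / s with hm'
      have hm'0 : 0 ≤ m' := div_nonneg hS1nn (by positivity)
      have hbd' : ∀ j ∈ r, |u j| ≤ m' := by
        intro j hj
        have hsum : (s:ℝ) * |u j| ≤ S1 := by
          have hle : (c₀.map (fun _ => |u j|)).sum ≤ S1 :=
            List.sum_le_sum fun i hi => hcross i hi j hj
          rw [List.map_const', List.sum_replicate, hlen, nsmul_eq_mul] at hle
          exact_mod_cast hle
        rw [hm', le_div_iff₀ (by positivity : (0:ℝ) < (s:ℝ))]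
        linarith
      have IH := shift u hs r hpr m' hm'0 hbd'
      have hkey : Real.sqrt s * m' = S1 / Real.sqrt s := by
        rw [hm', eq_div_iff (ne_of_gt hs0)]
        have hss : Real.sqrt s * Real.sqrt s = (s:ℝ) := Real.mul_self_sqrt (by positivity)
        field_simp
        nlinarith [hss]
      have hsplit : ((a :: t).map (fun i => |u i|)).sum
          = S1 + (r.map (fun i => |u i|)).sum := by
        rw [← happ, List.map_append, List.sum_append]
      rw [hsplit, add_div, ← hkey]
      linarith [IH]

lemma listsum_sub {β : Type*} (L : List β) (F G : β → ℝ) :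
    (L.map (fun c => F c - G c)).sum = (L.map F).sum - (L.map G).sum := by
  induction L with
  | nil => simp
  | cons c L ih => simp only [List.map_cons, List.sum_cons, ih]; ring

lemma listsum_const_mul {β : Type*} (K : ℝ) (L : List β) (F : β → ℝ) :
    (L.map (fun c => K * F c)).sum = K * (L.map F).sum := by
  induction L with
  | nil => simp
  | cons c L ih => simp only [List.map_cons, List.sum_cons, ih]; ring

end Alasso

open Alasso in
set_option maxHeartbeats 2000000 in
/-- recovery bound for ALASSO: with `D` a tight frame,
`σ_{2s} < 1/(1+3√2)`, `b = Ax + w`, `‖DᵀAᵀw‖_∞ ≤ λ/2`, and `x̂` an ALASSO minimizer,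
`‖x̂ − x‖₂ ≤ C₀√s·λ + C₁‖Dᵀx − (Dᵀx)_s‖₁/√s`. Here `T` indexes the `s`
largest-magnitude entries of `Dᵀx`, so `‖Dᵀx − (Dᵀx)_s‖₁ = ‖Dᵀ_{T^c}x‖₁`. -/
theorem alasso_recovery_bound
    {m n p s : ℕ} (hs : 1 ≤ s)
    (A : Matrix (Fin m) (Fin n) ℝ) (D : Matrix (Fin n) (Fin p) ℝ)
    (htf : D * D.transpose = 1) (σ : ℝ)
    (hA : DRIP A D (2 * s) σ) (hσ : σ < 1 / (1 + 3 * Real.sqrt 2))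
    (lam : ℝ) (hlam : 0 < lam)
    (x : Fin n → ℝ) (w b : Fin m → ℝ) (hb : b = A.mulVec x + w)
    (hw : linfnorm (D.transpose.mulVec (A.transpose.mulVec w)) ≤ lam / 2)
    (xh : Fin n → ℝ)
    (hmin : ∀ y : Fin n → ℝ,
      1 / 2 * (l2norm (A.mulVec xh - b)) ^ 2 + lam * l1norm (D.transpose.mulVec xh)
        ≤ 1 / 2 * (l2norm (A.mulVec y - b)) ^ 2 + lam * l1norm (D.transpose.mulVec y))
    (T : Finset (Fin p)) (hTcard : T.card = s)
    (hTbig : ∀ i ∈ T, ∀ j ∈ Tᶜ,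
      |D.transpose.mulVec x j| ≤ |D.transpose.mulVec x i|)
    (c₀ C₀ C₁ : ℝ)
    (hc₀ : c₀ = 1 / 2 + matnorm11 (D.transpose * D))
    (hC₀ : C₀ = 4 * Real.sqrt 2 * c₀ / (1 - (1 + 3 * Real.sqrt 2) * σ))
    (hC₁ : C₁ = 4 * ((Real.sqrt 2 - 1) * σ + 1) / (1 - (1 + 3 * Real.sqrt 2) * σ)) :
    l2norm (xh - x)
      ≤ C₀ * Real.sqrt (s : ℝ) * lam
        + C₁ * l1norm (restr Tᶜ (D.transpose.mulVec x)) / Real.sqrt (s : ℝ) := by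
  have hsqrt2 : (0:ℝ) < Real.sqrt 2 := Real.sqrt_pos.2 (by norm_num)
  have h32 : (0:ℝ) < 1 + 3 * Real.sqrt 2 := by positivity
  have hΔ : 0 < 1 - (1 + 3 * Real.sqrt 2) * σ := by
    have h1 : σ * (1 + 3 * Real.sqrt 2) < 1 := (lt_div_iff₀ h32).1 hσ
    nlinarith
  have hc₀n : (0:ℝ) ≤ c₀ := by
    rw [hc₀]
    have := matnorm11_nonneg (D.transpose * D)
    linarith
  have hss : (0:ℝ) < Real.sqrt s := Real.sqrt_pos.2 (by exact_mod_cast hs)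
  have hC₀n : 0 ≤ C₀ := by
    rw [hC₀]
    apply div_nonneg _ hΔ.le
    positivity
  rcases Nat.eq_zero_or_pos n with hn | hn
  · -- degenerate case: n = 0
    haveI hempty : IsEmpty (Fin n) := ⟨fun i => absurd i.2 (by omega)⟩
    have hLHS : l2norm (xh - x) = 0 := by
      unfold l2norm
      rw [Finset.univ_eq_empty, Finset.sum_empty, Real.sqrt_zero]
    have hzx : D.transpose.mulVec x = 0 := by
      funext j
      unfold Matrix.mulVec dotProduct
      rw [Finset.univ_eq_empty, Finset.sum_empty]
      rfl
    have hres : restr Tᶜ (D.transpose.mulVec x) = 0 := by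
      rw [hzx]; funext i; simp [restr]
    have hl10 : l1norm (restr Tᶜ (D.transpose.mulVec x)) = 0 := by
      rw [hres]; simp [l1norm]
    rw [hLHS, hl10]
    have h1 : 0 ≤ C₀ * Real.sqrt s * lam := by positivity
    have h2 : C₁ * 0 / Real.sqrt s = 0 := by ring
    linarith [h2.ge, h2.le]
  · -- main case : n ≥ 1
    have hσ0 : 0 ≤ σ := by
      by_contra hneg
      push_neg at hneg
      have hDcol : ∀ (j : Fin p) (i : Fin n), D i j = 0 := by
        intro j i
        set e : Fin p → ℝ := fun j' => if j' = j then 1 else 0 with he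
        have hl0 : l0norm e ≤ 2 * s := by
          unfold l0norm
          have hsub : Finset.univ.filter (fun j' => e j' ≠ 0) ⊆ {j} := by
            intro j' hj'
            simp only [Finset.mem_filter, Finset.mem_univ, true_and, he] at hj'
            simp only [Finset.mem_singleton]
            by_contra hne
            simp [hne] at hj'
          calc (Finset.univ.filter (fun j' => e j' ≠ 0)).card ≤ ({j} : Finset (Fin p)).card :=
                Finset.card_le_card hsub
            _ = 1 := Finset.card_singleton j
            _ ≤ 2 * s := by omega
        obtain ⟨hlow, hhigh⟩ := hA e hl0
        have hXnn : 0 ≤ (l2norm (D.mulVec e)) ^ 2 := sq_nonneg _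
        have h2σ : 0 ≤ 2 * (σ * (l2norm (D.mulVec e)) ^ 2) := by nlinarith
        have hXle : (l2norm (D.mulVec e)) ^ 2 ≤ 0 := by nlinarith
        have hl2z : l2norm (D.mulVec e) = 0 := by nlinarith [l2norm_nonneg (D.mulVec e)]
        have hDe : D.mulVec e = 0 := l2norm_eq_zero hl2z
        have hDij : (D.mulVec e) i = D i j := by
          unfold Matrix.mulVec dotProduct
          simp [he, mul_ite, Finset.sum_ite_eq']
        rw [hDe] at hDij
        rw [← hDij]
        rfl
      set i0 : Fin n := ⟨0, hn⟩
      have h1 : (D * D.transpose) i0 i0 = 1 := by rw [htf]; exact Matrix.one_apply_eq i0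
      rw [Matrix.mul_apply] at h1
      have h0 : ∑ j, D i0 j * D.transpose j i0 = 0 :=
        Finset.sum_eq_zero fun j _ => by rw [Matrix.transpose_apply, hDcol j i0]; ring
      rw [h0] at h1
      exact absurd h1 (by norm_num)
    -- setup
    set z : Fin p → ℝ := D.transpose.mulVec x with hzdef
    set g : Fin n → ℝ := xh - x with hgdef
    set u : Fin p → ℝ := D.transpose.mulVec g with hudef
    set ρ : ℝ := l1norm (restr Tᶜ z) with hρdef
    set r : Fin m → ℝ := A.mulVec xh - b with hrdef
    have hρn : (0:ℝ) ≤ ρ := by rw [hρdef]; exact l1norm_nonneg _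
    have hDu : D.mulVec u = g := by rw [hudef]; exact tf_mul htf g
    have hAgrw : A.mulVec g = r + w := by
      rw [hgdef, hrdef, hb, Matrix.mulVec_sub]
      funext i
      simp only [Pi.add_apply, Pi.sub_apply]
      ring
    -- Step B : first-order optimality
    have hopt : ∀ d : Fin n → ℝ,
        -(lam * l1norm (D.transpose.mulVec d)) ≤ ∑ i, (A.mulVec d) i * r i := by
      intro d
      set S : ℝ := ∑ i, (A.mulVec d) i * r i with hS
      set Q : ℝ := ∑ i, (A.mulVec d) i ^ 2 with hQ
      have hQn : 0 ≤ Q := by rw [hQ]; exact Finset.sum_nonneg fun i _ => sq_nonneg _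
      have key : ∀ t : ℝ, 0 < t →
          0 ≤ S + lam * l1norm (D.transpose.mulVec d) + t / 2 * Q := by
        intro t ht
        have hm := hmin (xh + t • d)
        have hAexp : A.mulVec (xh + t • d) - b = r + t • (A.mulVec d) := by
          rw [Matrix.mulVec_add, Matrix.mulVec_smul, hrdef]
          funext i
          simp only [Pi.add_apply, Pi.sub_apply, Pi.smul_apply, smul_eq_mul]
          ring
        have hl2exp : (l2norm (A.mulVec (xh + t • d) - b)) ^ 2
            = (l2norm r) ^ 2 + (2 * t * S + t ^ 2 * Q) := by
          rw [hAexp, l2norm_sq, l2norm_sq, hS, hQ]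
          rw [Finset.mul_sum, Finset.mul_sum, ← Finset.sum_add_distrib, ← Finset.sum_add_distrib]
          apply Finset.sum_congr rfl
          intro i _
          simp only [Pi.add_apply, Pi.smul_apply, smul_eq_mul]
          ring
        have hl1exp : l1norm (D.transpose.mulVec (xh + t • d))
            ≤ l1norm (D.transpose.mulVec xh) + t * l1norm (D.transpose.mulVec d) := by
          rw [Matrix.mulVec_add, Matrix.mulVec_smul]
          unfold l1norm
          rw [Finset.mul_sum, ← Finset.sum_add_distrib]
          apply Finset.sum_le_sum
          intro i _
          simp only [Pi.add_apply, Pi.smul_apply, smul_eq_mul]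
          calc |D.transpose.mulVec xh i + t * D.transpose.mulVec d i|
              ≤ |D.transpose.mulVec xh i| + |t * D.transpose.mulVec d i| := abs_add_le _ _
            _ = |D.transpose.mulVec xh i| + t * |D.transpose.mulVec d i| := by
                rw [abs_mul, abs_of_pos ht]
        have hmul := mul_le_mul_of_nonneg_left hl1exp hlam.le
        rw [hl2exp] at hm
        nlinarith [hm, hmul]
      by_contra hcon
      push_neg at hcon
      set ε : ℝ := -(lam * l1norm (D.transpose.mulVec d)) - S with hε
      have hεpos : 0 < ε := by rw [hε]; linarith
      have hQ1 : (0:ℝ) < Q + 1 := by linarith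
      have ht : 0 < ε / (Q + 1) := div_pos hεpos hQ1
      have hk := key (ε / (Q + 1)) ht
      have hfra : Q / (Q + 1) ≤ 1 := by rw [div_le_one hQ1]; linarith
      have heq : (ε / (Q + 1)) / 2 * Q = ε / 2 * (Q / (Q + 1)) := by ring
      have hsmall : (ε / (Q + 1)) / 2 * Q ≤ ε / 2 := by
        rw [heq]
        nlinarith [hεpos, hfra, div_nonneg hQn hQ1.le]
      rw [hε] at hsmall hk
      linarith
    -- coordinatewise bound for Dᵀ Aᵀ r
    have hsub : ∀ j : Fin p, |(D.transpose.mulVec (A.transpose.mulVec r)) j|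
        ≤ lam * matnorm11 (D.transpose * D) := by
      intro j
      set e : Fin p → ℝ := fun j' => if j' = j then (1:ℝ) else 0 with he
      have hene : e ≠ 0 := by
        intro h0
        have := congrFun h0 j
        simp [he] at this
      have hl1e : l1norm e = 1 := by
        unfold l1norm
        have hterm : ∀ j', |e j'| = if j' = j then (1:ℝ) else 0 := by
          intro j'
          rw [he]
          by_cases hcase : j' = j <;> simp [hcase]
        rw [Finset.sum_congr rfl fun j' _ => hterm j']
        rw [Finset.sum_ite_eq' Finset.univ j (fun _ => (1:ℝ))]
        simp
      set d : Fin n → ℝ := D.mulVec e with hd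
      have h1 := hopt d
      have h2 := hopt (-d)
      have hneg1 : A.mulVec (-d) = -(A.mulVec d) := by
        have : (-d) = (-1 : ℝ) • d := by funext i; simp
        rw [this, Matrix.mulVec_smul]
        funext i
        simp
      have hSneg : ∑ i, (A.mulVec (-d)) i * r i = -∑ i, (A.mulVec d) i * r i := by
        rw [hneg1, ← Finset.sum_neg_distrib]
        exact Finset.sum_congr rfl fun i _ => by simp
      have hDneg : D.transpose.mulVec (-d) = -(D.transpose.mulVec d) := by
        have : (-d) = (-1 : ℝ) • d := by funext i; simp
        rw [this, Matrix.mulVec_smul]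
        funext i
        simp
      have hl1neg : l1norm (D.transpose.mulVec (-d)) = l1norm (D.transpose.mulVec d) := by
        rw [hDneg]
        unfold l1norm
        exact Finset.sum_congr rfl fun i _ => by simp
      have habs : |∑ i, (A.mulVec d) i * r i| ≤ lam * l1norm (D.transpose.mulVec d) := by
        rw [hSneg, hl1neg] at h2
        rw [abs_le]
        constructor <;> linarith
      have hchain : ∑ i, (A.mulVec d) i * r i
          = (D.transpose.mulVec (A.transpose.mulVec r)) j := by
        rw [adj_dot A d r, hd, adj_dot D e (A.transpose.mulVec r), he]
        simp [ite_mul, Finset.sum_ite_eq']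
      have hDtd : l1norm (D.transpose.mulVec d) ≤ matnorm11 (D.transpose * D) := by
        rw [hd, Matrix.mulVec_mulVec]
        have := l1_mulVec_le_matnorm (D.transpose * D) e hene
        rw [hl1e, mul_one] at this
        exact this
      rw [← hchain]
      calc |∑ i, (A.mulVec d) i * r i| ≤ lam * l1norm (D.transpose.mulVec d) := habs
        _ ≤ lam * matnorm11 (D.transpose * D) := mul_le_mul_of_nonneg_left hDtd hlam.le
    have hcorr : ∀ j : Fin p,
        |(D.transpose.mulVec (A.transpose.mulVec (A.mulVec g))) j| ≤ c₀ * lam := by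
      intro j
      have hsplit2 : D.transpose.mulVec (A.transpose.mulVec (A.mulVec g))
          = D.transpose.mulVec (A.transpose.mulVec r)
            + D.transpose.mulVec (A.transpose.mulVec w) := by
        rw [hAgrw, Matrix.mulVec_add, Matrix.mulVec_add]
      rw [hsplit2]
      have h1 := hsub j
      have h2 : |(D.transpose.mulVec (A.transpose.mulVec w)) j| ≤ lam / 2 :=
        le_trans (abs_le_linfnorm _ j) hw
      calc |(D.transpose.mulVec (A.transpose.mulVec r)
              + D.transpose.mulVec (A.transpose.mulVec w)) j|
          ≤ |(D.transpose.mulVec (A.transpose.mulVec r)) j|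
            + |(D.transpose.mulVec (A.transpose.mulVec w)) j| := by
            simp only [Pi.add_apply]
            exact abs_add_le _ _
        _ ≤ lam * matnorm11 (D.transpose * D) + lam / 2 := add_le_add h1 h2
        _ = c₀ * lam := by rw [hc₀]; ring
    -- Step A : cone constraint
    have hpt : ∀ a c : ℝ, |a| - |c| ≤ |a + c| := by
      intro a c
      calc |a| - |c| = |a| - |-c| := by rw [abs_neg]
        _ ≤ |a - -c| := abs_sub_abs_le_abs_sub _ _
        _ = |a + c| := by rw [sub_neg_eq_add]
    have hDtxh : D.transpose.mulVec xh = z + u := by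
      rw [hzdef, hudef, ← Matrix.mulVec_add]
      congr 1
      rw [hgdef]
      funext i
      simp
    have hcone : ∑ j ∈ Tᶜ, |u j| ≤ 3 * ∑ i ∈ T, |u i| + 4 * ρ := by
      have hm := hmin x
      have hAxb : A.mulVec x - b = -w := by
        rw [hb]; funext i; simp
      have hl2w : (l2norm (A.mulVec x - b)) ^ 2 = ∑ i, w i ^ 2 := by
        rw [hAxb, l2norm_sq]
        exact Finset.sum_congr rfl fun i _ => by simp
      have hrg : r = A.mulVec g - w := by rw [hAgrw]; funext i; simp
      have hl2r : (l2norm r) ^ 2 = ∑ i, (A.mulVec g) i ^ 2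
          - 2 * (∑ i, (A.mulVec g) i * w i) + ∑ i, w i ^ 2 := by
        have hptw : ∀ i : Fin m, ((A.mulVec g - w) i) ^ 2
            = ((A.mulVec g) i ^ 2 - 2 * ((A.mulVec g) i * w i)) + w i ^ 2 := by
          intro i
          simp only [Pi.sub_apply]
          ring
        rw [l2norm_sq, hrg, Finset.sum_congr rfl (fun i _ => hptw i),
          Finset.sum_add_distrib, Finset.sum_sub_distrib, ← Finset.mul_sum]
      have hP : (0:ℝ) ≤ ∑ i, (A.mulVec g) i ^ 2 := Finset.sum_nonneg fun i _ => sq_nonneg _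
      have hAgw : ∑ i, (A.mulVec g) i * w i
          = ∑ jj, u jj * (D.transpose.mulVec (A.transpose.mulVec w)) jj := by
        rw [adj_dot A g w, ← hDu, adj_dot D u (A.transpose.mulVec w)]
      have huniv : ∑ jj, |u jj| = ∑ i ∈ T, |u i| + ∑ j ∈ Tᶜ, |u j| :=
        (Finset.sum_add_sum_compl T fun jj => |u jj|).symm
      have hAgw_le : ∑ i, (A.mulVec g) i * w i
          ≤ lam / 2 * (∑ i ∈ T, |u i| + ∑ j ∈ Tᶜ, |u j|) := by
        rw [hAgw, ← huniv]
        calc ∑ jj, u jj * (D.transpose.mulVec (A.transpose.mulVec w)) jj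
            ≤ ∑ jj, |u jj * (D.transpose.mulVec (A.transpose.mulVec w)) jj| :=
              Finset.sum_le_sum fun jj _ => le_abs_self _
          _ = ∑ jj, |u jj| * |(D.transpose.mulVec (A.transpose.mulVec w)) jj| :=
              Finset.sum_congr rfl fun jj _ => abs_mul _ _
          _ ≤ ∑ jj, |u jj| * (lam / 2) := Finset.sum_le_sum fun jj _ =>
              mul_le_mul_of_nonneg_left (le_trans (abs_le_linfnorm _ jj) hw) (abs_nonneg _)
          _ = lam / 2 * ∑ jj, |u jj| := by rw [← Finset.sum_mul]; ring
      have hl1low : (∑ i ∈ T, |z i| - ∑ i ∈ T, |u i|)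
          + (∑ j ∈ Tᶜ, |u j| - ∑ j ∈ Tᶜ, |z j|) ≤ l1norm (D.transpose.mulVec xh) := by
        rw [hDtxh]
        unfold l1norm
        rw [← Finset.sum_add_sum_compl T (fun i => |(z + u) i|)]
        have hTpart : ∑ i ∈ T, |z i| - ∑ i ∈ T, |u i| ≤ ∑ i ∈ T, |(z + u) i| := by
          rw [← Finset.sum_sub_distrib]
          apply Finset.sum_le_sum
          intro i _
          simp only [Pi.add_apply]
          exact hpt (z i) (u i)
        have hTcpart : ∑ j ∈ Tᶜ, |u j| - ∑ j ∈ Tᶜ, |z j| ≤ ∑ j ∈ Tᶜ, |(z + u) j| := by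
          rw [← Finset.sum_sub_distrib]
          apply Finset.sum_le_sum
          intro j _
          simp only [Pi.add_apply]
          calc |u j| - |z j| ≤ |u j + z j| := hpt (u j) (z j)
            _ = |z j + u j| := by rw [add_comm]
        linarith
      have hρT : ρ = ∑ j ∈ Tᶜ, |z j| := by rw [hρdef, l1_restr]
      have hl1z : lam * l1norm (D.transpose.mulVec x) = lam * (∑ i ∈ T, |z i| + ρ) := by
        rw [← hzdef]
        unfold l1norm
        rw [← Finset.sum_add_sum_compl T (fun i => |z i|), hρT]
      have hρT' : lam * (∑ j ∈ Tᶜ, |z j|) = lam * ρ := by rw [hρT]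
      have hmono1 := mul_le_mul_of_nonneg_left hl1low hlam.le
      have hfinal : lam * ((∑ j ∈ Tᶜ, |u j|) / 2)
          ≤ lam * (3 * (∑ i ∈ T, |u i|) / 2 + 2 * ρ) := by
        linarith [hm, hl2r, hl2w, hAgw_le, hmono1, hP, hl1z, hρT']
      have := (mul_le_mul_iff_right₀ hlam).1 hfinal
      linarith
    -- Step C : block decomposition of the tail
    set le : Fin p → Fin p → Bool := fun i j => decide (|u j| ≤ |u i|) with hle
    set l : List (Fin p) := Tᶜ.toList.mergeSort le with hldef
    have hsorted : List.Pairwise (fun i j => |u j| ≤ |u i|) l := by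
      have htrans : ∀ a b' c : Fin p, le a b' = true → le b' c = true → le a c = true := by
        intro a b' c hab hbc
        simp only [hle, decide_eq_true_eq] at *
        exact le_trans hbc hab
      have htotal : ∀ a b' : Fin p, (le a b' || le b' a) = true := by
        intro a b'
        simp only [hle, Bool.or_eq_true, decide_eq_true_eq]
        exact le_total _ _
      have hp2 := List.pairwise_mergeSort htrans htotal (Tᶜ.toList)
      rw [hldef]
      exact hp2.imp (fun hab => by simpa [hle] using hab)
    have hperm : (Tᶜ.toList.mergeSort le).Perm Tᶜ.toList := List.mergeSort_perm _ _
    have hnd : l.Nodup := by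
      rw [hldef]
      exact (hperm.nodup_iff).2 (Finset.nodup_toList Tᶜ)
    have hlfin : l.toFinset = Tᶜ := by
      rw [hldef, List.toFinset_eq_of_perm _ _ hperm, Finset.toList_toFinset]
    set L : List (List (Fin p)) := chunks s l with hLdef
    have hjoin : L.flatten = l := chunks_join s l
    have hjnd : L.flatten.Nodup := by rw [hjoin]; exact hnd
    set f : List (Fin p) → (Fin p → ℝ) := fun c => restr c.toFinset u with hfdef
    have hF1 : (L.map f).sum = restr Tᶜ u := by
      rw [hfdef, restr_join u L hjnd, hjoin, hlfin]
    set T₁ : Finset (Fin p) := (L.headD []).toFinset with hT₁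
    have hF2 : restr Tᶜ u = restr T₁ u + (L.tail.map f).sum := by
      rw [← hF1]
      cases hLc : L with
      | nil => simp [hT₁, hLc, restr_empty]
      | cons c1 tl =>
          rw [hT₁, hLc]
          simp only [List.headD_cons, List.tail_cons, List.map_cons, List.sum_cons]
          rfl
    have hmemL : ∀ c ∈ L, c.toFinset ⊆ Tᶜ ∧ c.toFinset.card ≤ s := by
      intro c hc
      constructor
      · intro i hi
        have hi' := List.mem_toFinset.1 hi
        rw [← hlfin, List.mem_toFinset, ← hjoin]
        exact List.mem_flatten.2 ⟨c, hc, hi'⟩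
      · exact le_trans (List.toFinset_card_le c) (chunks_length_le hs l c hc)
    have hT₁sub : T₁ ⊆ Tᶜ := by
      cases hLc : L with
      | nil => rw [hT₁, hLc]; simp
      | cons c1 tl =>
          rw [hT₁, hLc]
          have hc1 : c1 ∈ L := by rw [hLc]; exact List.mem_cons_self
          exact (hmemL c1 hc1).1
    have hT₁card : T₁.card ≤ s := by
      cases hLc : L with
      | nil =>
          rw [hT₁, hLc]
          simp only [List.headD_nil, List.toFinset_nil, Finset.card_empty]
          omega
      | cons c1 tl =>
          rw [hT₁, hLc]
          have hc1 : c1 ∈ L := by rw [hLc]; exact List.mem_cons_self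
          exact (hmemL c1 hc1).2
    have hdisjTT₁ : Disjoint T T₁ := by
      rw [Finset.disjoint_left]
      intro a haT haT₁
      have hmem := hT₁sub haT₁
      rw [Finset.mem_compl] at hmem
      exact hmem haT
    set v : Fin p → ℝ := restr (T ∪ T₁) u with hvdef
    set α : ℝ := l2norm v with hα
    have hαn : 0 ≤ α := by rw [hα]; exact l2norm_nonneg v
    set Z : ℝ := (L.tail.map (fun c => l2norm (f c))).sum with hZ
    have hZn : 0 ≤ Z := by
      rw [hZ]
      apply List.sum_nonneg
      intro y hy
      rcases List.mem_map.1 hy with ⟨c, _, rfl⟩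
      exact l2norm_nonneg _
    have hudecomp : u = v + (L.tail.map f).sum := by
      have h1 : restr (T ∪ Tᶜ) u = u := by
        rw [Finset.union_compl]; funext i; simp [restr]
      have h2 : u = restr T u + restr Tᶜ u := by
        rw [← restr_union_disj disjoint_compl_right u, h1]
      rw [h2, hF2, hvdef, restr_union_disj hdisjTT₁ u, add_assoc]
    have hZ1 : Z ≤ l1norm (restr Tᶜ u) / Real.sqrt s := by
      have hsh := shift_tail u hs l hsorted
      have he1 : Z = ((chunks s l).tail.map
          (fun c => Real.sqrt (∑ i ∈ c.toFinset, u i ^ 2))).sum := by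
        rw [hZ, hLdef]
        congr 1
        apply List.map_congr_left
        intro c _
        rw [hfdef, l2_restr_eq]
      have he2 : (l.map (fun i => |u i|)).sum = l1norm (restr Tᶜ u) := by
        rw [l1_restr, ← hlfin, List.sum_toFinset _ hnd]
      rw [he1, ← he2]
      exact hsh
    -- Step C : D-RIP estimates
    set W : Fin n → ℝ := D.mulVec v with hW
    set a₀ : ℝ := l2norm (restr T u) with ha₀def
    set a₁ : ℝ := l2norm (restr T₁ u) with ha₁def
    have ha₀n : 0 ≤ a₀ := by rw [ha₀def]; exact l2norm_nonneg _
    have ha₁n : 0 ≤ a₁ := by rw [ha₁def]; exact l2norm_nonneg _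
    have hl0v : l0norm v ≤ 2 * s := by
      calc l0norm v ≤ (T ∪ T₁).card := by rw [hvdef]; exact l0_restr_le _ _
        _ ≤ T.card + T₁.card := Finset.card_union_le _ _
        _ ≤ 2 * s := by rw [hTcard]; omega
    have hdotuv : ∑ i, u i * v i = α ^ 2 := by
      rw [hα, hvdef, dot_restr, l2_restr_sq]
    have hgW : ∑ i, g i * W i = α ^ 2 := by
      have h1 := adj_dot D v g
      rw [← hudef] at h1
      calc ∑ i, g i * W i = ∑ i, (D.mulVec v) i * g i := by
            rw [hW]; exact Finset.sum_congr rfl fun i _ => mul_comm _ _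
        _ = ∑ j, v j * u j := h1
        _ = ∑ j, u j * v j := Finset.sum_congr rfl fun j _ => mul_comm _ _
        _ = α ^ 2 := hdotuv
    have hαsq : α ^ 2 = ∑ i ∈ T, u i ^ 2 + ∑ i ∈ T₁, u i ^ 2 := by
      rw [hα, hvdef, l2_restr_sq, Finset.sum_union hdisjTT₁]
    have hTnn : (0:ℝ) ≤ ∑ i ∈ T, u i ^ 2 := Finset.sum_nonneg fun i _ => sq_nonneg _
    have hT₁nn : (0:ℝ) ≤ ∑ i ∈ T₁, u i ^ 2 := Finset.sum_nonneg fun i _ => sq_nonneg _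
    have ha₀α : a₀ ≤ α := by
      apply sq_le_imp ha₀n hαn
      rw [ha₀def, l2_restr_sq, hαsq]
      linarith
    have ha₁α : a₁ ≤ α := by
      apply sq_le_imp ha₁n hαn
      rw [ha₁def, l2_restr_sq, hαsq]
      linarith
    have ha01 : a₀ + a₁ ≤ Real.sqrt 2 * α := by
      apply sq_le_imp (add_nonneg ha₀n ha₁n) (by positivity)
      have hsq2 : (Real.sqrt 2) ^ 2 = 2 := Real.sq_sqrt (by norm_num)
      have h1 : a₀ ^ 2 = ∑ i ∈ T, u i ^ 2 := by rw [ha₀def, l2_restr_sq]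
      have h2 : a₁ ^ 2 = ∑ i ∈ T₁, u i ^ 2 := by rw [ha₁def, l2_restr_sq]
      nlinarith [sq_nonneg (a₀ - a₁), hαsq]
    have hl1v : l1norm v ≤ Real.sqrt 2 * Real.sqrt s * α := by
      have h1 : l1norm (restr (T ∪ T₁) u)
          ≤ Real.sqrt ((T ∪ T₁).card) * l2norm (restr (T ∪ T₁) u) :=
        l1_restr_le_sqrt_card _ _
      have h2 : Real.sqrt ((T ∪ T₁).card) ≤ Real.sqrt 2 * Real.sqrt s := by
        rw [← Real.sqrt_mul (by norm_num : (0:ℝ) ≤ 2)]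
        apply Real.sqrt_le_sqrt
        have h3 : (T ∪ T₁).card ≤ 2 * s := by
          calc (T ∪ T₁).card ≤ T.card + T₁.card := Finset.card_union_le _ _
            _ ≤ 2 * s := by rw [hTcard]; omega
        push_cast
        exact_mod_cast h3
      calc l1norm v ≤ Real.sqrt ((T ∪ T₁).card) * α := by
            rw [hvdef, hα]; exact h1
        _ ≤ Real.sqrt 2 * Real.sqrt s * α := mul_le_mul_of_nonneg_right h2 hαn
    -- upper bound on the correlation X
    set X : ℝ := ∑ i, (A.mulVec g) i * (A.mulVec W) i with hX
    have hX_ub : X ≤ c₀ * lam * l1norm v := by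
      have h1 : X = ∑ k, W k * (A.transpose.mulVec (A.mulVec g)) k := by
        rw [hX]
        rw [show ∑ i, (A.mulVec g) i * (A.mulVec W) i
            = ∑ i, (A.mulVec W) i * (A.mulVec g) i from
          Finset.sum_congr rfl fun i _ => mul_comm _ _]
        exact adj_dot A W (A.mulVec g)
      have h2 : ∑ k, W k * (A.transpose.mulVec (A.mulVec g)) k
          = ∑ j, v j * (D.transpose.mulVec (A.transpose.mulVec (A.mulVec g))) j := by
        rw [hW]; exact adj_dot D v _
      rw [h1, h2]
      calc ∑ j, v j * (D.transpose.mulVec (A.transpose.mulVec (A.mulVec g))) j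
          ≤ ∑ j, |v j| * (c₀ * lam) := by
            apply Finset.sum_le_sum
            intro j _
            calc v j * (D.transpose.mulVec (A.transpose.mulVec (A.mulVec g))) j
                ≤ |v j * (D.transpose.mulVec (A.transpose.mulVec (A.mulVec g))) j| :=
                  le_abs_self _
              _ = |v j| * |(D.transpose.mulVec (A.transpose.mulVec (A.mulVec g))) j| :=
                  abs_mul _ _
              _ ≤ |v j| * (c₀ * lam) :=
                  mul_le_mul_of_nonneg_left (hcorr j) (abs_nonneg _)
        _ = c₀ * lam * l1norm v := by
            unfold l1norm
            rw [← Finset.sum_mul]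
            ring
    -- decomposition of g and A g
    have hgdecomp : g = W + (L.tail.map (fun c => D.mulVec (f c))).sum := by
      have h1 : D.mulVec u = g := hDu
      rw [hudecomp, Matrix.mulVec_add, mulVec_listsum D L.tail f] at h1
      rw [← h1, hW]
    have hAgdecomp : A.mulVec g
        = A.mulVec W + (L.tail.map (fun c => A.mulVec (D.mulVec (f c)))).sum := by
      rw [hgdecomp, Matrix.mulVec_add, mulVec_listsum A L.tail (fun c => D.mulVec (f c))]
    have hXsplit : X = ∑ i, (A.mulVec W) i * (A.mulVec W) i
        + (L.tail.map (fun c => ∑ i, (A.mulVec W) i * (A.mulVec (D.mulVec (f c))) i)).sum := by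
      rw [hX]
      rw [show ∑ i, (A.mulVec g) i * (A.mulVec W) i
          = ∑ i, (A.mulVec W) i * (A.mulVec g) i from
        Finset.sum_congr rfl fun i _ => mul_comm _ _]
      conv_lhs => rw [hAgdecomp]
      have hpt2 : ∀ i : Fin m, (A.mulVec W) i
          * (A.mulVec W + (L.tail.map (fun c => A.mulVec (D.mulVec (f c)))).sum) i
          = (A.mulVec W) i * (A.mulVec W) i
            + (A.mulVec W) i * ((L.tail.map (fun c => A.mulVec (D.mulVec (f c)))).sum) i := by
        intro i
        simp only [Pi.add_apply]
        ring
      rw [Finset.sum_congr rfl fun i _ => hpt2 i, Finset.sum_add_distrib,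
        dot_listsum (A.mulVec W) L.tail (fun c => A.mulVec (D.mulVec (f c)))]
    -- per-block lower bound
    have hvsplit : v = restr T u + restr T₁ u := by rw [hvdef, restr_union_disj hdisjTT₁]
    have hWsplit : W = D.mulVec (restr T u) + D.mulVec (restr T₁ u) := by
      rw [hW, hvsplit, Matrix.mulVec_add]
    have hterm : ∀ c ∈ L.tail,
        ∑ i, W i * (D.mulVec (f c)) i - σ * l2norm (f c) * (a₀ + a₁)
          ≤ ∑ i, (A.mulVec W) i * (A.mulVec (D.mulVec (f c))) i := by
      intro c hc
      have hcmem : c ∈ L := List.mem_of_mem_tail hc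
      have hcard := (hmemL c hcmem).2
      have hl0c : l0norm (f c) ≤ s := by
        rw [hfdef]
        exact le_trans (l0_restr_le _ _) hcard
      have hx0 : l0norm (f c) + l0norm (restr T u) ≤ 2 * s := by
        have h1 := l0_restr_le T u
        rw [hTcard] at h1
        omega
      have hx1 : l0norm (f c) + l0norm (restr T₁ u) ≤ 2 * s := by
        have h1 := le_trans (l0_restr_le T₁ u) hT₁card
        omega
      have hb0 := drip_cross A D σ hA hσ0 (f c) (restr T u) hx0
      have hb1 := drip_cross A D σ hA hσ0 (f c) (restr T₁ u) hx1
      have hgen0 : σ * l2norm (D.mulVec (f c)) * l2norm (D.mulVec (restr T u))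
          ≤ σ * l2norm (f c) * a₀ := by
        rw [ha₀def]
        apply mul_le_mul
        · exact mul_le_mul_of_nonneg_left (tf_l2_D_le htf (f c)) hσ0
        · exact tf_l2_D_le htf (restr T u)
        · exact l2norm_nonneg _
        · exact mul_nonneg hσ0 (l2norm_nonneg _)
      have hgen1 : σ * l2norm (D.mulVec (f c)) * l2norm (D.mulVec (restr T₁ u))
          ≤ σ * l2norm (f c) * a₁ := by
        rw [ha₁def]
        apply mul_le_mul
        · exact mul_le_mul_of_nonneg_left (tf_l2_D_le htf (f c)) hσ0
        · exact tf_l2_D_le htf (restr T₁ u)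
        · exact l2norm_nonneg _
        · exact mul_nonneg hσ0 (l2norm_nonneg _)
      have h0' : ∑ i, (D.mulVec (f c)) i * (D.mulVec (restr T u)) i
            - σ * l2norm (f c) * a₀
          ≤ ∑ i, (A.mulVec (D.mulVec (f c))) i * (A.mulVec (D.mulVec (restr T u))) i := by
        have habs := abs_le.1 hb0
        linarith [habs.1]
      have h1' : ∑ i, (D.mulVec (f c)) i * (D.mulVec (restr T₁ u)) i
            - σ * l2norm (f c) * a₁
          ≤ ∑ i, (A.mulVec (D.mulVec (f c))) i * (A.mulVec (D.mulVec (restr T₁ u))) i := by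
        have habs := abs_le.1 hb1
        linarith [habs.1]
      have hWs : ∑ i, (A.mulVec W) i * (A.mulVec (D.mulVec (f c))) i
          = ∑ i, (A.mulVec (D.mulVec (f c))) i * (A.mulVec (D.mulVec (restr T u))) i
            + ∑ i, (A.mulVec (D.mulVec (f c))) i * (A.mulVec (D.mulVec (restr T₁ u))) i := by
        rw [hWsplit, Matrix.mulVec_add, ← Finset.sum_add_distrib]
        apply Finset.sum_congr rfl
        intro i _
        simp only [Pi.add_apply]
        ring
      have hWd : ∑ i, W i * (D.mulVec (f c)) i
          = ∑ i, (D.mulVec (f c)) i * (D.mulVec (restr T u)) i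
            + ∑ i, (D.mulVec (f c)) i * (D.mulVec (restr T₁ u)) i := by
        rw [hWsplit, ← Finset.sum_add_distrib]
        apply Finset.sum_congr rfl
        intro i _
        simp only [Pi.add_apply]
        ring
      rw [hWs, hWd]
      have hex : σ * l2norm (f c) * (a₀ + a₁)
          = σ * l2norm (f c) * a₀ + σ * l2norm (f c) * a₁ := by ring
      linarith [h0', h1']
    -- sum of per-block bounds
    have hsum_lb : (L.tail.map (fun c => ∑ i, W i * (D.mulVec (f c)) i)).sum
          - σ * (a₀ + a₁) * Z
        ≤ (L.tail.map
            (fun c => ∑ i, (A.mulVec W) i * (A.mulVec (D.mulVec (f c))) i)).sum := by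
      have h1 : (L.tail.map (fun c => ∑ i, W i * (D.mulVec (f c)) i
            - (σ * (a₀ + a₁)) * l2norm (f c))).sum
          ≤ (L.tail.map
              (fun c => ∑ i, (A.mulVec W) i * (A.mulVec (D.mulVec (f c))) i)).sum := by
        apply List.sum_le_sum
        intro c hc
        have := hterm c hc
        have hre : σ * l2norm (f c) * (a₀ + a₁) = (σ * (a₀ + a₁)) * l2norm (f c) := by ring
        linarith [hre.ge, hre.le]
      rw [listsum_sub L.tail (fun c => ∑ i, W i * (D.mulVec (f c)) i)
        (fun c => (σ * (a₀ + a₁)) * l2norm (f c)),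
        listsum_const_mul (σ * (a₀ + a₁)) L.tail (fun c => l2norm (f c)), ← hZ] at h1
      exact h1
    -- the tail dot product
    have htails : (L.tail.map (fun c => D.mulVec (f c))).sum = g - W := by
      rw [hgdecomp]
      funext i
      simp
    have hdot2 : (L.tail.map (fun c => ∑ i, W i * (D.mulVec (f c)) i)).sum
        = α ^ 2 - ∑ i, W i * W i := by
      rw [← dot_listsum W L.tail (fun c => D.mulVec (f c)), htails]
      have hpt3 : ∀ i : Fin n, W i * (g - W) i = g i * W i - W i * W i := by
        intro i
        simp only [Pi.sub_apply]
        ring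
      rw [Finset.sum_congr rfl fun i _ => hpt3 i, Finset.sum_sub_distrib, hgW]
    -- D-RIP lower bound on the main block
    have hAW_lb : (1 - σ) * ∑ i, W i * W i
        ≤ ∑ i, (A.mulVec W) i * (A.mulVec W) i := by
      have hdr := (hA v hl0v).1
      have hWW : ∑ i, (A.mulVec (D.mulVec v)) i * (A.mulVec (D.mulVec v)) i
          = (l2norm (A.mulVec (D.mulVec v))) ^ 2 := by
        rw [l2norm_sq]
        exact Finset.sum_congr rfl fun i _ => by ring
      have hWW2 : ∑ i, (D.mulVec v) i * (D.mulVec v) i = (l2norm (D.mulVec v)) ^ 2 := by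
        rw [l2norm_sq]
        exact Finset.sum_congr rfl fun i _ => by ring
      rw [hW, hWW, hWW2]
      exact hdr
    have hWsq_le : ∑ i, W i * W i ≤ α ^ 2 := by
      have h1 : l2norm W ≤ α := by
        rw [hW, hα]
        exact tf_l2_D_le htf v
      have h2 : ∑ i, W i * W i = (l2norm W) ^ 2 := by
        rw [l2norm_sq]
        exact Finset.sum_congr rfl fun i _ => by ring
      rw [h2]
      nlinarith [l2norm_nonneg W]
    -- main quadratic inequality
    have hσWW : σ * ∑ i, W i * W i ≤ σ * α ^ 2 := mul_le_mul_of_nonneg_left hWsq_le hσ0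
    have hσZ : σ * (a₀ + a₁) * Z ≤ Real.sqrt 2 * σ * α * Z := by
      have h1 : σ * (a₀ + a₁) ≤ σ * (Real.sqrt 2 * α) := mul_le_mul_of_nonneg_left ha01 hσ0
      have h2 := mul_le_mul_of_nonneg_right h1 hZn
      calc σ * (a₀ + a₁) * Z ≤ σ * (Real.sqrt 2 * α) * Z := h2
        _ = Real.sqrt 2 * σ * α * Z := by ring
    have hXul : c₀ * lam * l1norm v ≤ c₀ * lam * (Real.sqrt 2 * Real.sqrt s * α) :=
      mul_le_mul_of_nonneg_left hl1v (mul_nonneg hc₀n hlam.le)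
    have hmain : α ^ 2 ≤ c₀ * lam * (Real.sqrt 2 * Real.sqrt s * α)
        + σ * α ^ 2 + Real.sqrt 2 * σ * α * Z := by
      linarith [hXsplit, hsum_lb, hdot2, hAW_lb, hX_ub, hXul, hσWW, hσZ]
    -- divide by α
    have hE5 : (1 - σ) * α ≤ Real.sqrt 2 * Real.sqrt s * (c₀ * lam) + Real.sqrt 2 * σ * Z := by
      rcases eq_or_lt_of_le hαn with h0 | h0
      · rw [← h0]
        have h1 : 0 ≤ Real.sqrt 2 * Real.sqrt s * (c₀ * lam) := by positivity
        have h2 : 0 ≤ Real.sqrt 2 * σ * Z := by positivity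
        linarith
      · have hmul : ((1 - σ) * α) * α
            ≤ (Real.sqrt 2 * Real.sqrt s * (c₀ * lam) + Real.sqrt 2 * σ * Z) * α := by
          have hexp : ((1 - σ) * α) * α = α ^ 2 - σ * α ^ 2 := by ring
          have hexp2 : (Real.sqrt 2 * Real.sqrt s * (c₀ * lam) + Real.sqrt 2 * σ * Z) * α
              = c₀ * lam * (Real.sqrt 2 * Real.sqrt s * α) + Real.sqrt 2 * σ * α * Z := by ring
          rw [hexp, hexp2]
          linarith [hmain]
        exact (mul_le_mul_iff_left₀ h0).1 hmul
    -- bound Z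
    have hZ3 : Z ≤ 3 * α + 4 * ρ / Real.sqrt s := by
      have h1 : l1norm (restr Tᶜ u) ≤ 3 * l1norm (restr T u) + 4 * ρ := by
        rw [l1_restr, l1_restr]
        exact hcone
      have h2 : l1norm (restr T u) ≤ Real.sqrt s * α := by
        calc l1norm (restr T u) ≤ Real.sqrt (T.card) * l2norm (restr T u) :=
              l1_restr_le_sqrt_card _ _
          _ ≤ Real.sqrt s * α := by
              rw [hTcard, ← ha₀def]
              exact mul_le_mul_of_nonneg_left ha₀α (Real.sqrt_nonneg _)
      calc Z ≤ l1norm (restr Tᶜ u) / Real.sqrt s := hZ1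
        _ ≤ (3 * (Real.sqrt s * α) + 4 * ρ) / Real.sqrt s := by
            exact (div_le_div_iff_of_pos_right hss).2 (by linarith)
        _ = 3 * α + 4 * ρ / Real.sqrt s := by
            field_simp
    have hE6 : (1 - (1 + 3 * Real.sqrt 2) * σ) * α
        ≤ Real.sqrt 2 * (c₀ * lam) * Real.sqrt s + 4 * Real.sqrt 2 * σ * ρ / Real.sqrt s := by
      have h1 : Real.sqrt 2 * σ * Z ≤ Real.sqrt 2 * σ * (3 * α + 4 * ρ / Real.sqrt s) :=
        mul_le_mul_of_nonneg_left hZ3 (by positivity)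
      have h2 : Real.sqrt 2 * σ * (3 * α + 4 * ρ / Real.sqrt s)
          = 3 * (Real.sqrt 2 * σ * α) + 4 * Real.sqrt 2 * σ * ρ / Real.sqrt s := by ring
      have h3 : (1 - (1 + 3 * Real.sqrt 2) * σ) * α
          = (1 - σ) * α - 3 * (Real.sqrt 2 * σ * α) := by ring
      have h4 : Real.sqrt 2 * Real.sqrt s * (c₀ * lam)
          = Real.sqrt 2 * (c₀ * lam) * Real.sqrt s := by ring
      rw [h3]
      rw [h2] at h1
      linarith [hE5, h1, h4.ge, h4.le]
    -- conclusion
    have hl2u : l2norm u ≤ α + Z := by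
      rw [hudecomp]
      calc l2norm (v + (L.tail.map f).sum)
          ≤ l2norm v + l2norm ((L.tail.map f).sum) := l2norm_add_le _ _
        _ ≤ α + Z := by
            have h1 := l2_listsum_le L.tail f
            rw [← hZ] at h1
            rw [← hα]
            linarith
    have hl2g : l2norm g = l2norm u := by
      rw [hudef]
      exact (tf_l2_dt htf g).symm
    have hαE : α ≤ (Real.sqrt 2 * (c₀ * lam) * Real.sqrt s
        + 4 * Real.sqrt 2 * σ * ρ / Real.sqrt s) / (1 - (1 + 3 * Real.sqrt 2) * σ) := by
      rw [le_div_iff₀ hΔ]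
      have h5 : α * (1 - (1 + 3 * Real.sqrt 2) * σ)
          = (1 - (1 + 3 * Real.sqrt 2) * σ) * α := by ring
      rw [h5]
      exact hE6
    have hid : C₀ * Real.sqrt s * lam + C₁ * ρ / Real.sqrt s
        = 4 * ((Real.sqrt 2 * (c₀ * lam) * Real.sqrt s
            + 4 * Real.sqrt 2 * σ * ρ / Real.sqrt s) / (1 - (1 + 3 * Real.sqrt 2) * σ))
          + 4 * ρ / Real.sqrt s := by
      rw [hC₀, hC₁]
      have hsq2 : Real.sqrt 2 * Real.sqrt 2 = 2 := Real.mul_self_sqrt (by norm_num)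
      have hΔne : 1 - (1 + 3 * Real.sqrt 2) * σ ≠ 0 := hΔ.ne'
      have hinv : (1 - (1 + 3 * Real.sqrt 2) * σ) * (1 - (1 + 3 * Real.sqrt 2) * σ)⁻¹ = 1 :=
        mul_inv_cancel₀ hΔne
      linear_combination (4 * ρ * (Real.sqrt s)⁻¹) * hinv
    calc l2norm g = l2norm u := hl2g
      _ ≤ α + Z := hl2u
      _ ≤ 4 * α + 4 * ρ / Real.sqrt s := by linarith [hZ3, hαn]
      _ ≤ 4 * ((Real.sqrt 2 * (c₀ * lam) * Real.sqrt s
            + 4 * Real.sqrt 2 * σ * ρ / Real.sqrt s) / (1 - (1 + 3 * Real.sqrt 2) * σ))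
          + 4 * ρ / Real.sqrt s := by linarith [hαE]
      _ = C₀ * Real.sqrt s * lam + C₁ * ρ / Real.sqrt s := hid.symm
end
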